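/- arXiv:1501.04523 — 11 statements merged into one kernel-verified Lean document; each statement's English description precedes it below -/
import Mathlib

section
/- For every finite poset P and every n ≥ 1, the letterplace ideal L(n,P) and the transposed co-letterplace ideal L(P,n)^τ are Alexander dual in k[x_{[n]×P}]; explicitly, a monomial m of k[x_{[n]×P}] lies in L(P,n)^τ if and only if m has a nontrivial common divisor with the monomial m_{Γφ} for every isotone map φ : [n] → P. -/
open MvPolynomial

section Aux

variable {P : Type*} [PartialOrder P] [Finite P]

/-- Rank function: the least monotone selection value, with `n` as failure sentinel. -/
noncomputable def rk (n : ℕ) (S : ℕ × P → Prop) : P → ℕ :=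
  wellFounded_lt.fix fun p ih =>
    sInf ({ i | i < n ∧ S (i, p) ∧ ∀ q, ∀ h : q < p, ih q h ≤ i } ∪ {n})

lemma rk_eq (n : ℕ) (S : ℕ × P → Prop) (p : P) :
    rk n S p = sInf ({ i | i < n ∧ S (i, p) ∧ ∀ q, q < p → rk n S q ≤ i } ∪ {n}) := by
  unfold rk
  rw [WellFounded.fix_eq]

lemma rk_le_n (n : ℕ) (S : ℕ × P → Prop) (p : P) : rk n S p ≤ n := by
  rw [rk_eq]
  exact Nat.sInf_le (Set.mem_union_right _ rfl)

lemma rk_mem {n : ℕ} {S : ℕ × P → Prop} {p : P} (h : rk n S p < n) :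
    S (rk n S p, p) ∧ ∀ q, q < p → rk n S q ≤ rk n S p := by
  have hmem : rk n S p ∈
      ({ i | i < n ∧ S (i, p) ∧ ∀ q, q < p → rk n S q ≤ i } ∪ {n} : Set ℕ) := by
    rw [rk_eq]
    exact Nat.sInf_mem ⟨n, Set.mem_union_right _ rfl⟩
  rcases hmem with hmem | hmem
  · exact ⟨hmem.2.1, hmem.2.2⟩
  · rw [Set.mem_singleton_iff] at hmem
    omega

lemma rk_mono (n : ℕ) (S : ℕ × P → Prop) : Monotone (rk n S) := by
  intro q p hqp
  rcases eq_or_lt_of_le hqp with rfl | hlt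
  · exact le_rfl
  rcases lt_or_ge (rk n S p) n with h | h
  · exact (rk_mem h).2 q hlt
  · exact le_trans (rk_le_n n S q) h

lemma rk_not_S {n : ℕ} {S : ℕ × P → Prop} {p : P} {i : ℕ}
    (h1 : i < rk n S p) (h2 : ∀ q, q < p → rk n S q ≤ i) (h3 : i < n) : ¬ S (i, p) := by
  intro hSip
  have : rk n S p ≤ i := by
    rw [rk_eq]
    exact Nat.sInf_le (Set.mem_union_left _ ⟨h3, hSip, h2⟩)
  omega

lemma exists_min_step (n : ℕ) (S : ℕ × P → Prop) {b : P} {i : ℕ} (h : i < rk n S b) :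
    ∃ m : P, m ≤ b ∧ i < rk n S m ∧ ∀ q, q < m → rk n S q ≤ i := by
  obtain ⟨m, ⟨hmb, hmr⟩, hmin⟩ :=
    wellFounded_lt.has_min { q : P | q ≤ b ∧ i < rk n S q } ⟨b, le_refl b, h⟩
  refine ⟨m, hmb, hmr, fun q hq => ?_⟩
  by_contra hc
  exact hmin q ⟨le_trans hq.le hmb, not_le.mp hc⟩ hq

/-- One step of the chain construction: a minimal element below `b` with rank `> i`. -/
noncomputable def chainF (n : ℕ) (S : ℕ × P → Prop) (b : P) (i : ℕ) : P :=
  if h : i < rk n S b then (exists_min_step n S h).choose else b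

lemma chainF_spec {n : ℕ} {S : ℕ × P → Prop} {b : P} {i : ℕ} (h : i < rk n S b) :
    chainF n S b i ≤ b ∧ i < rk n S (chainF n S b i) ∧
      ∀ q, q < chainF n S b i → rk n S q ≤ i := by
  rw [chainF, dif_pos h]
  exact (exists_min_step n S h).choose_spec

/-- The descending chain witnessing the failure of a monotone selection. -/
noncomputable def chainG (n : ℕ) (S : ℕ × P → Prop) (p₀ : P) : ℕ → P
  | 0 => chainF n S p₀ (n - 1)
  | j + 1 => chainF n S (chainG n S p₀ j) (n - 1 - (j + 1))

lemma chainG_inv {n : ℕ} {S : ℕ × P → Prop} {p₀ : P} (hn : 1 ≤ n)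
    (hp0 : rk n S p₀ = n) (j : ℕ) :
    n - 1 - j < rk n S (chainG n S p₀ j) ∧
      ∀ q, q < chainG n S p₀ j → rk n S q ≤ n - 1 - j := by
  induction j with
  | zero =>
    have h0 : n - 1 < rk n S p₀ := by omega
    obtain ⟨-, h1, h2⟩ := chainF_spec h0
    exact ⟨h1, h2⟩
  | succ j ih =>
    have h0 : n - 1 - (j + 1) < rk n S (chainG n S p₀ j) :=
      lt_of_le_of_lt (by omega) ih.1
    obtain ⟨-, h1, h2⟩ := chainF_spec h0
    exact ⟨h1, h2⟩

lemma chainG_anti {n : ℕ} {S : ℕ × P → Prop} {p₀ : P} (hn : 1 ≤ n)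
    (hp0 : rk n S p₀ = n) : Antitone (chainG n S p₀) := by
  refine antitone_nat_of_succ_le fun j => ?_
  have h0 : n - 1 - (j + 1) < rk n S (chainG n S p₀ j) :=
    lt_of_le_of_lt (by omega) (chainG_inv hn hp0 j).1
  exact (chainF_spec h0).1

/-- If the rank fails somewhere, there is a monotone map `[n] → P` avoiding `S`. -/
lemma exists_bad_chain {n : ℕ} {S : ℕ × P → Prop} (hn : 1 ≤ n) {p₀ : P}
    (hp0 : rk n S p₀ = n) :
    ∃ φ : Fin n → P, Monotone φ ∧ ∀ i : Fin n, ¬ S ((i : ℕ), φ i) := by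
  refine ⟨fun i => chainG n S p₀ (n - 1 - (i : ℕ)), ?_, ?_⟩
  · intro a b hab
    exact chainG_anti hn hp0 (Nat.sub_le_sub_left hab (n - 1))
  · intro i
    have hiv : (i : ℕ) ≤ n - 1 := by omega
    have hj : n - 1 - (n - 1 - (i : ℕ)) = (i : ℕ) := Nat.sub_sub_self hiv
    have h1 := (chainG_inv hn hp0 (n - 1 - (i : ℕ))).1
    have h2 := (chainG_inv hn hp0 (n - 1 - (i : ℕ))).2
    rw [hj] at h1 h2
    exact rk_not_S h1 h2 i.isLt

lemma fin_monotone_fixed {n : ℕ} (hn : 1 ≤ n) {f : Fin n → Fin n} (hf : Monotone f) :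
    ∃ i, f i = i := by
  classical
  have h0 : (0 : ℕ) < n := hn
  set T : Finset (Fin n) := Finset.univ.filter (fun j => j ≤ f j) with hT
  have hne : T.Nonempty :=
    ⟨⟨0, h0⟩, Finset.mem_filter.mpr ⟨Finset.mem_univ _, by
      rw [Fin.le_def]; exact Nat.zero_le _⟩⟩
  set i := T.max' hne with hi
  have hile : i ≤ f i := (Finset.mem_filter.mp (T.max'_mem hne)).2
  rcases eq_or_lt_of_le hile with h | h
  · exact ⟨i, h.symm⟩
  · have hmem : f i ∈ T := Finset.mem_filter.mpr ⟨Finset.mem_univ _, hf hile⟩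
    exact absurd (T.le_max' _ hmem) (not_le.mpr h)

end Aux

/-- The letterplace ideal `L(n,P)` and the transposed co-letterplace ideal `L(P,n)^τ`
are Alexander dual in `k[x_{[n]×P}]`: a monomial `m` lies in `L(P,n)^τ` iff `m` has a
nontrivial common divisor with the monomial `m_{Γφ}` for every isotone map `φ : [n] → P`. -/
theorem letterplace_coletterplace_alexander_dual
    (k : Type*) [Field k] {P : Type*} [PartialOrder P] [Fintype P]
    (n : ℕ) (hn : 1 ≤ n)
    (LPnτ : Ideal (MvPolynomial (Fin n × P) k))
    (hLPnτ : LPnτ = Ideal.span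
      { m | ∃ ψ : P → Fin n, Monotone ψ ∧ m = ∏ p : P, X (ψ p, p) })
    (d : Fin n × P →₀ ℕ) :
    monomial d (1 : k) ∈ LPnτ ↔
      ∀ φ : Fin n → P, Monotone φ → ∃ i : Fin n, (i, φ i) ∈ d.support := by
  classical
  subst hLPnτ
  -- Rewrite generators as an image of monomials
  have hprod : ∀ ψ : P → Fin n,
      (∏ p : P, X (ψ p, p) : MvPolynomial (Fin n × P) k)
        = monomial (∑ p : P, Finsupp.single (ψ p, p) 1) 1 := by
    intro ψ
    rw [monomial_sum_one]
    refine Finset.prod_congr rfl fun p _ => ?_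
    rw [← pow_one (X (ψ p, p) : MvPolynomial (Fin n × P) k), X_pow_eq_monomial]
  have hset : { m | ∃ ψ : P → Fin n, Monotone ψ ∧ m = ∏ p : P, X (ψ p, p) }
      = (fun e => monomial e (1 : k)) ''
        { e | ∃ ψ : P → Fin n, Monotone ψ ∧ e = ∑ p : P, Finsupp.single (ψ p, p) 1 } := by
    ext m
    simp only [Set.mem_setOf_eq, Set.mem_image]
    constructor
    · rintro ⟨ψ, hψ, rfl⟩
      exact ⟨∑ p : P, Finsupp.single (ψ p, p) 1, ⟨ψ, hψ, rfl⟩, (hprod ψ).symm⟩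
    · rintro ⟨e, ⟨ψ, hψ, rfl⟩, rfl⟩
      exact ⟨ψ, hψ, (hprod ψ).symm⟩
  rw [hset, mem_ideal_span_monomial_image]
  have hsupp : (monomial d (1 : k)).support = {d} := by
    rw [support_monomial, if_neg one_ne_zero]
  rw [hsupp]
  -- dominance characterization
  have key : ∀ ψ : P → Fin n,
      ((∑ p : P, Finsupp.single (ψ p, p) (1 : ℕ)) ≤ d ↔ ∀ p : P, (ψ p, p) ∈ d.support) := by
    intro ψ
    constructor
    · intro h p
      rw [Finsupp.mem_support_iff]
      have h2 := h (ψ p, p)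
      have h3 : (1 : ℕ) ≤ (∑ p' : P, Finsupp.single (ψ p', p') (1 : ℕ)) (ψ p, p) := by
        rw [Finsupp.finset_sum_apply]
        have := Finset.single_le_sum
          (f := fun p' => (Finsupp.single (ψ p', p') (1 : ℕ)) (ψ p, p))
          (fun _ _ => Nat.zero_le _) (Finset.mem_univ p)
        simpa using this
      omega
    · intro h a
      rw [Finsupp.finset_sum_apply]
      rw [Finset.sum_eq_single a.2]
      · rw [Finsupp.single_apply]
        split_ifs with he
        · have hm := Finsupp.mem_support_iff.mp (h a.2)
          rw [he] at hm
          omega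
        · exact Nat.zero_le _
      · intro p' _ hne
        rw [Finsupp.single_apply, if_neg]
        intro hc
        exact hne (congrArg Prod.snd hc)
      · intro h'
        exact absurd (Finset.mem_univ _) h'
  constructor
  · -- forward: the generator divides, find common variable with every Γφ
    rintro hmem φ hφ
    obtain ⟨e, ⟨ψ, hψ, rfl⟩, hed⟩ := hmem d (Finset.mem_singleton_self d)
    have hsub := (key ψ).mp hed
    obtain ⟨i, hi⟩ := fin_monotone_fixed hn (hψ.comp hφ)
    have hthis := hsub (φ i)
    rw [show ψ (φ i) = i from hi] at hthis
    exact ⟨i, hthis⟩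
  · -- backward
    intro H xi hxi
    rw [Finset.mem_singleton] at hxi
    rw [hxi]
    suffices hψ : ∃ ψ : P → Fin n, Monotone ψ ∧ ∀ p : P, (ψ p, p) ∈ d.support by
      obtain ⟨ψ, h1, h2⟩ := hψ
      exact ⟨∑ p : P, Finsupp.single (ψ p, p) 1, ⟨ψ, h1, rfl⟩, (key ψ).mpr h2⟩
    set S : ℕ × P → Prop := fun ip => ∃ h : ip.1 < n, ((⟨ip.1, h⟩ : Fin n), ip.2) ∈ d.support
      with hSdef
    by_cases hall : ∀ p : P, rk n S p < n
    · refine ⟨fun p => ⟨rk n S p, hall p⟩, ?_, ?_⟩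
      · intro a b hab
        exact Fin.mk_le_mk.mpr (rk_mono n S hab)
      · intro p
        obtain ⟨h', hm⟩ := (rk_mem (hall p)).1
        exact hm
    · exfalso
      push_neg at hall
      obtain ⟨p₀, hp₀⟩ := hall
      have hp0n : rk n S p₀ = n := le_antisymm (rk_le_n n S p₀) hp₀
      obtain ⟨φ, hφ, hbad⟩ := exists_bad_chain hn hp0n
      obtain ⟨i, hi⟩ := H φ hφ
      exact hbad i ⟨i.isLt, hi⟩
end

section
/- Let Q and P be finite nonempty posets and suppose Q has a unique maximal element or a unique minimal element. Then the height of the ideal L(Q,P) in k[x_{Q×P}] equals |P|, and the minimal primes of L(Q,P) of height |P| are precisely the ideals p_ψ = ({x_{(ψ(p),p)} : p ∈ P}) where ψ ranges over the isotone maps P → Q. In particular L(Q,P) ⊆ p_ψ for every isotone ψ : P → Q, and each p_ψ is a minimal prime of L(Q,P). -/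
/-!
A prime `𝔭` contains `L(Q,P)` iff for every isotone `φ : Q → P` it contains some variable
`x_(q, φ q)`. Taking `φ` constant, `𝔭` contains a variable `x_(c p, p)` for every `p`, so its height
is at least `|P|`. A minimal prime over `L(Q,P)` is generated by the variables it contains; if its
height is `|P|`, these are exactly the variables on the graph of some `ψ : P → Q`, and `ψ` is
isotone because every `ψ ∘ φ` has a fixed point. Conversely, when `Q` has a top or a bottom `m`,
iterating the isotone map `φ ∘ ψ` from `φ m` reaches a fixed point `p`, and `x_(ψ p, p)` divides the
generator of `φ`; so `L(Q,P) ⊆ p_ψ`. A prime generated by `n` variables has height `n`: at least `n`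
by the chain of its variable subprimes, at most `n` by Krull's height theorem.
-/

open MvPolynomial

/-- The height of an ideal: the infimum of the heights (in the prime spectrum,
ordered by inclusion) of the prime ideals containing it. -/
noncomputable def idealHeight {R : Type*} [CommRing R] (I : Ideal R) : ℕ∞ :=
  ⨅ p : {p : PrimeSpectrum R // I ≤ p.asIdeal}, Order.height p.1

theorem idealHeight_eq_height {R : Type*} [CommRing R] (I : Ideal R) :
    idealHeight I = I.height := by
  refine le_antisymm ?_ ?_
  · rw [Ideal.height_eq_inf_minimalPrimes]
    refine le_iInf₂ fun J hJ => ?_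
    exact iInf_le_of_le ⟨⟨J, hJ.1.1⟩, hJ.1.2⟩ (PrimeSpectrum.height_eq_orderHeight _).ge
  · exact le_iInf fun p =>
      (Ideal.height_mono p.2).trans (PrimeSpectrum.height_eq_orderHeight p.1).le

section FixedPoints

variable {α : Type*} [PartialOrder α] {g : α → α} {a : α}

theorem Monotone.exists_isFixedPt_of_map_le [WellFoundedLT α] (hg : Monotone g) (ha : g a ≤ a) :
    ∃ x, Function.IsFixedPt g x := by
  obtain ⟨n, hn⟩ := WellFoundedLT.antitone_chain_condition (hg.antitone_iterate_of_map_le ha)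
  refine ⟨g^[n] a, ?_⟩
  rw [Function.IsFixedPt, ← Function.iterate_succ_apply' g n a]
  exact (hn (n + 1) n.le_succ).symm

theorem Monotone.exists_isFixedPt_of_le_map [WellFoundedGT α] (hg : Monotone g) (ha : a ≤ g a) :
    ∃ x, Function.IsFixedPt g x :=
  hg.dual.exists_isFixedPt_of_map_le (α := αᵒᵈ) ha

end FixedPoints

section IsotoneMaps

variable {Q P : Type*} [PartialOrder Q] [PartialOrder P]

theorem exists_forall_le_of_existsUnique_isMax [Finite Q] (h : ∃! m : Q, IsMax m) :
    ∃ m : Q, ∀ q, q ≤ m := by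
  obtain ⟨m, -, hm⟩ := h
  refine ⟨m, fun q => ?_⟩
  obtain ⟨b, hqb, hb⟩ := Finite.exists_le_maximal (p := fun _ : Q => True) trivial
  exact hm b (fun c hc => hb.2 trivial hc) ▸ hqb

theorem exists_forall_ge_of_existsUnique_isMin [Finite Q] (h : ∃! m : Q, IsMin m) :
    ∃ m : Q, ∀ q, m ≤ q :=
  exists_forall_le_of_existsUnique_isMax (Q := Qᵒᵈ) h

theorem exists_map_map_eq_of_exists_top_or_bot [Finite P]
    (hQ : (∃ m : Q, ∀ q, q ≤ m) ∨ ∃ m : Q, ∀ q, m ≤ q) {φ : Q → P} {ψ : P → Q}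
    (hφ : Monotone φ) (hψ : Monotone ψ) : ∃ p, φ (ψ p) = p := by
  rcases hQ with ⟨m, hm⟩ | ⟨m, hm⟩
  · exact (hφ.comp hψ).exists_isFixedPt_of_map_le (hφ (hm (ψ (φ m))))
  · exact (hφ.comp hψ).exists_isFixedPt_of_le_map (hφ (hm (ψ (φ m))))

theorem monotone_of_forall_exists_map_map_eq {ψ : P → Q}
    (h : ∀ φ : Q → P, Monotone φ → ∃ q, ψ (φ q) = q) : Monotone ψ := by
  classical
  intro p₁ p₂ hp
  by_contra hψp
  -- the step map jumping from `p₁` to `p₂` at `ψ p₁` would make `ψ ∘ φ` fixed-point free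
  obtain ⟨q, hq⟩ := h (fun q => if ψ p₁ ≤ q then p₂ else p₁) fun a b hab => by
    dsimp only
    split_ifs with ha hb hb
    exacts [le_rfl, absurd (ha.trans hab) hb, hp, le_rfl]
  by_cases hq₁ : ψ p₁ ≤ q
  · rw [if_pos hq₁] at hq
    exact hψp (hq ▸ hq₁)
  · rw [if_neg hq₁] at hq
    exact hq₁ hq.le

end IsotoneMaps

namespace MvPolynomial

variable {R σ : Type*} [CommRing R]

theorem X_mem_span_X_image_iff [Nontrivial R] {V : Set σ} {v : σ} :
    (X v : MvPolynomial σ R) ∈ Ideal.span (X '' V) ↔ v ∈ V := by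
  simp [mem_ideal_span_X_image, support_X, Finsupp.single_apply_ne_zero]

theorem sub_aeval_indicator_mem_span_X_image (V : Set σ) (f : MvPolynomial σ R) :
    f - aeval (Vᶜ.indicator X) f ∈ Ideal.span (X '' V) := by
  induction f using MvPolynomial.induction_on with
  | C a => simp
  | add p q hp hq => simpa [add_sub_add_comm] using add_mem hp hq
  | mul_X p v hp =>
    by_cases hv : v ∈ V
    · simpa [hv] using Ideal.mul_mem_left _ p (Ideal.subset_span (Set.mem_image_of_mem X hv))
    · simpa [hv, sub_mul] using Ideal.mul_mem_right (X v) _ hp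

theorem ker_aeval_indicator_compl_X (V : Set σ) :
    RingHom.ker (aeval (Vᶜ.indicator X) : MvPolynomial σ R →ₐ[R] MvPolynomial σ R) =
      Ideal.span (X '' V) := by
  refine le_antisymm (fun f hf => ?_) ?_
  · have := sub_aeval_indicator_mem_span_X_image V f
    rwa [RingHom.mem_ker.mp hf, sub_zero] at this
  · rw [Ideal.span_le]
    rintro _ ⟨v, hv, rfl⟩
    simp [hv]

theorem isPrime_span_X_image [IsDomain R] (V : Set σ) :
    (Ideal.span (X '' V) : Ideal (MvPolynomial σ R)).IsPrime :=
  ker_aeval_indicator_compl_X (R := R) V ▸ RingHom.ker_isPrime _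

theorem card_le_height_span_X_image [IsDomain R] (T : Finset σ) :
    (T.card : ℕ∞) ≤ (Ideal.span (X '' T) : Ideal (MvPolynomial σ R)).height := by
  classical
  induction T using Finset.induction_on with
  | empty => simp
  | insert a s ha ih =>
    have := isPrime_span_X_image (R := R) (s : Set σ)
    have := isPrime_span_X_image (R := R) ((insert a s : Finset σ) : Set σ)
    have hlt : (Ideal.span (X '' s) : Ideal (MvPolynomial σ R)) <
        Ideal.span (X '' ↑(insert a s)) :=
      SetLike.lt_iff_le_and_exists.mpr ⟨Ideal.span_mono (Set.image_mono (by simp)), X a,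
        X_mem_span_X_image_iff.mpr (by simp), by rwa [X_mem_span_X_image_iff, Finset.mem_coe]⟩
    calc ((insert a s).card : ℕ∞) = s.card + 1 := by simp [Finset.card_insert_of_notMem ha]
      _ ≤ (Ideal.span (X '' s) : Ideal (MvPolynomial σ R)).height + 1 := by gcongr
      _ ≤ _ := Ideal.height_add_one_le_of_lt_of_isPrime hlt

theorem height_span_X_image [IsDomain R] [IsNoetherianRing R] [Finite σ] (T : Finset σ) :
    (Ideal.span (X '' T) : Ideal (MvPolynomial σ R)).height = T.card := by
  classical
  have := isPrime_span_X_image (R := R) (T : Set σ)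
  refine le_antisymm ?_ (card_le_height_span_X_image T)
  calc _ ≤ ((T.image X).card : ℕ∞) :=
        Ideal.height_le_card_of_mem_minimalPrimes_span_finset (by
          rw [Finset.coe_image, Ideal.minimalPrimes_eq_subsingleton_self]; rfl)
    _ ≤ T.card := by exact_mod_cast Finset.card_image_le

theorem card_le_height_span_range_X [IsDomain R] {ι : Type*} [Fintype ι] {f : ι → σ}
    (hf : Function.Injective f) :
    (Fintype.card ι : ℕ∞) ≤
      (Ideal.span (Set.range fun i => (X (f i) : MvPolynomial σ R))).height := by
  classical
  have h := card_le_height_span_X_image (R := R) (Finset.univ.map ⟨f, hf⟩)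
  rwa [Finset.coe_map, Finset.coe_univ, Set.image_univ, ← Set.range_comp, Finset.card_map,
    Finset.card_univ] at h

theorem height_span_range_X [IsDomain R] [IsNoetherianRing R] [Finite σ] {ι : Type*} [Fintype ι]
    {f : ι → σ} (hf : Function.Injective f) :
    (Ideal.span (Set.range fun i => (X (f i) : MvPolynomial σ R))).height = Fintype.card ι := by
  classical
  have h := height_span_X_image (R := R) (Finset.univ.map ⟨f, hf⟩)
  rwa [Finset.coe_map, Finset.coe_univ, Set.image_univ, ← Set.range_comp, Finset.card_map,
    Finset.card_univ] at h

end MvPolynomial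

section Letterplace

variable (R : Type*) [CommRing R] {Q P : Type*}

/-- The prime `p_ψ`. -/
noncomputable def graphIdeal (ψ : P → Q) : Ideal (MvPolynomial (Q × P) R) :=
  Ideal.span (Set.range fun p => X (ψ p, p))

variable (Q P) in
noncomputable def letterplaceIdeal [PartialOrder Q] [PartialOrder P] [Fintype Q] :
    Ideal (MvPolynomial (Q × P) R) :=
  Ideal.span {m | ∃ φ : Q → P, Monotone φ ∧ m = ∏ q : Q, X (q, φ q)}

theorem graph_injective (ψ : P → Q) : Function.Injective fun p => (ψ p, p) :=
  fun _ _ h => congrArg Prod.snd h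

theorem graphIdeal_eq_span_X_image (ψ : P → Q) :
    graphIdeal R ψ = Ideal.span (X '' Set.range fun p => (ψ p, p)) := by
  rw [graphIdeal, ← Set.range_comp]
  rfl

instance [IsDomain R] (ψ : P → Q) : (graphIdeal R ψ).IsPrime :=
  graphIdeal_eq_span_X_image R ψ ▸ isPrime_span_X_image _

theorem height_graphIdeal [IsDomain R] [IsNoetherianRing R] [Finite Q] [Fintype P] (ψ : P → Q) :
    (graphIdeal R ψ).height = Fintype.card P :=
  height_span_range_X (graph_injective ψ)

variable [PartialOrder Q] [PartialOrder P] [Fintype Q]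

theorem letterplaceIdeal_le_iff {𝔭 : Ideal (MvPolynomial (Q × P) R)} [𝔭.IsPrime] :
    letterplaceIdeal R Q P ≤ 𝔭 ↔ ∀ φ : Q → P, Monotone φ → ∃ q, X (q, φ q) ∈ 𝔭 := by
  rw [letterplaceIdeal, Ideal.span_le]
  constructor
  · intro h φ hφ
    obtain ⟨q, -, hq⟩ := Ideal.IsPrime.prod_mem_iff.mp (h ⟨φ, hφ, rfl⟩)
    exact ⟨q, hq⟩
  · rintro h _ ⟨φ, hφ, rfl⟩
    obtain ⟨q, hq⟩ := h φ hφ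
    exact Ideal.IsPrime.prod_mem_iff.mpr ⟨q, Finset.mem_univ q, hq⟩

theorem letterplaceIdeal_le_graphIdeal_iff [IsDomain R] {ψ : P → Q} :
    letterplaceIdeal R Q P ≤ graphIdeal R ψ ↔ ∀ φ : Q → P, Monotone φ → ∃ q, ψ (φ q) = q := by
  rw [letterplaceIdeal_le_iff]
  simp [graphIdeal_eq_span_X_image, X_mem_span_X_image_iff]

theorem card_le_height_of_letterplaceIdeal_le [IsDomain R] [Fintype P]
    {𝔭 : Ideal (MvPolynomial (Q × P) R)} [𝔭.IsPrime] (h : letterplaceIdeal R Q P ≤ 𝔭) :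
    (Fintype.card P : ℕ∞) ≤ 𝔭.height := by
  choose c hc using fun p : P => (letterplaceIdeal_le_iff R).mp h (fun _ => p) monotone_const
  calc (Fintype.card P : ℕ∞) ≤ (graphIdeal R c).height :=
        card_le_height_span_range_X (graph_injective c)
    _ ≤ 𝔭.height := Ideal.height_mono (Ideal.span_le.mpr (Set.range_subset_iff.mpr hc))

theorem height_letterplaceIdeal [IsDomain R] [IsNoetherianRing R] [Nonempty Q] [Fintype P] :
    (letterplaceIdeal R Q P).height = Fintype.card P := by
  refine le_antisymm ?_ ?_
  · obtain ⟨m⟩ := ‹Nonempty Q›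
    calc _ ≤ (graphIdeal R fun _ : P => m).height :=
          Ideal.height_mono ((letterplaceIdeal_le_graphIdeal_iff R).mpr fun _ _ => ⟨m, rfl⟩)
      _ = _ := height_graphIdeal R _
  · rw [Ideal.height_eq_inf_minimalPrimes]
    refine le_iInf₂ fun J hJ => ?_
    have := hJ.1.1
    exact card_le_height_of_letterplaceIdeal_le R hJ.1.2

theorem eq_span_X_image_of_mem_minimalPrimes [IsDomain R] {𝔭 : Ideal (MvPolynomial (Q × P) R)}
    (h : 𝔭 ∈ (letterplaceIdeal R Q P).minimalPrimes) :
    𝔭 = Ideal.span (X '' {v | X v ∈ 𝔭}) := by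
  have := h.1.1
  have hle : Ideal.span (X '' {v | X v ∈ 𝔭}) ≤ 𝔭 :=
    Ideal.span_le.mpr (Set.image_subset_iff.mpr fun _ hv => hv)
  have := isPrime_span_X_image (R := R) {v | X v ∈ 𝔭}
  refine le_antisymm (h.2 ⟨this, ?_⟩ hle) hle
  rw [letterplaceIdeal_le_iff]
  simpa [X_mem_span_X_image_iff] using (letterplaceIdeal_le_iff R).mp h.1.2

theorem graphIdeal_mem_minimalPrimes [IsDomain R] [Finite P]
    (hQ : (∃ m : Q, ∀ q, q ≤ m) ∨ ∃ m : Q, ∀ q, m ≤ q) {ψ : P → Q} (hψ : Monotone ψ) :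
    graphIdeal R ψ ∈ (letterplaceIdeal R Q P).minimalPrimes := by
  refine ⟨⟨inferInstance, (letterplaceIdeal_le_graphIdeal_iff R).mpr fun φ hφ => ?_⟩,
    fun 𝔭 ⟨h𝔭, hL⟩ hle => ?_⟩
  · obtain ⟨p, hp⟩ := exists_map_map_eq_of_exists_top_or_bot hQ hφ hψ
    exact ⟨ψ p, congrArg ψ hp⟩
  · rw [graphIdeal, Ideal.span_le]
    rintro _ ⟨p, rfl⟩
    obtain ⟨q, hq⟩ := (letterplaceIdeal_le_iff R).mp hL (fun _ => p) monotone_const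
    have : ψ p = q := by
      simpa [graphIdeal_eq_span_X_image, X_mem_span_X_image_iff] using hle hq
    subst this
    exact hq

theorem exists_monotone_eq_graphIdeal [IsDomain R] [IsNoetherianRing R] [Fintype P]
    {𝔭 : Ideal (MvPolynomial (Q × P) R)} (h : 𝔭 ∈ (letterplaceIdeal R Q P).minimalPrimes)
    (hht : 𝔭.height = Fintype.card P) : ∃ ψ : P → Q, Monotone ψ ∧ 𝔭 = graphIdeal R ψ := by
  classical
  have := h.1.1
  choose c hc using fun p : P => (letterplaceIdeal_le_iff R).mp h.1.2 (fun _ => p) monotone_const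
  let S := Finset.univ.filter fun v => X v ∈ 𝔭
  let G := Finset.univ.map ⟨_, graph_injective c⟩
  have h𝔭S : 𝔭 = Ideal.span (X '' S) := by
    simpa [S] using eq_span_X_image_of_mem_minimalPrimes R h
  -- the graph `G` of `c` lies in `S`, and `|S| = height 𝔭 = |P| = |G|`
  have hGS : G = S := by
    refine Finset.eq_of_subset_of_card_le (by simpa [G, S, Finset.subset_iff] using hc) ?_
    have := height_span_X_image (R := R) S
    rw [← h𝔭S, hht] at this
    simpa [G] using (Nat.cast_inj.mp this).ge
  have h𝔭 : 𝔭 = graphIdeal R c := by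
    rw [h𝔭S, ← hGS, graphIdeal_eq_span_X_image, Finset.coe_map, Finset.coe_univ, Set.image_univ]
    rfl
  exact ⟨c, monotone_of_forall_exists_map_map_eq
    ((letterplaceIdeal_le_graphIdeal_iff R).mp (h𝔭 ▸ h.1.2)), h𝔭⟩

end Letterplace

theorem letterplace_minimal_primes_general
    (k : Type*) [Field k]
    {Q P : Type*} [PartialOrder Q] [Fintype Q] [Nonempty Q]
    [PartialOrder P] [Fintype P]
    (hQ : (∃! m : Q, IsMax m) ∨ (∃! m : Q, IsMin m))
    (L : Ideal (MvPolynomial (Q × P) k))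
    (hL : L = Ideal.span
      { m | ∃ φ : Q → P, Monotone φ ∧ m = ∏ q : Q, X (q, φ q) }) :
    idealHeight L = (Fintype.card P : ℕ∞)
    ∧ (∀ 𝔭 : Ideal (MvPolynomial (Q × P) k),
        (𝔭 ∈ L.minimalPrimes ∧ idealHeight 𝔭 = (Fintype.card P : ℕ∞)) ↔
          ∃ ψ : P → Q, Monotone ψ ∧
            𝔭 = Ideal.span (Set.range fun p : P => (X (ψ p, p) : MvPolynomial (Q × P) k)))
    ∧ (∀ ψ : P → Q, Monotone ψ →
        L ≤ Ideal.span (Set.range fun p : P => (X (ψ p, p) : MvPolynomial (Q × P) k))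
        ∧ Ideal.span (Set.range fun p : P => (X (ψ p, p) : MvPolynomial (Q × P) k))
            ∈ L.minimalPrimes) := by
  obtain rfl : L = letterplaceIdeal k Q P := hL
  have hQ' : (∃ m : Q, ∀ q, q ≤ m) ∨ ∃ m : Q, ∀ q, m ≤ q :=
    hQ.imp exists_forall_le_of_existsUnique_isMax exists_forall_ge_of_existsUnique_isMin
  have hmin (ψ : P → Q) (hψ : Monotone ψ) := graphIdeal_mem_minimalPrimes k hQ' hψ
  simp only [idealHeight_eq_height]
  refine ⟨height_letterplaceIdeal k,
    fun 𝔭 => ⟨fun h => exists_monotone_eq_graphIdeal k h.1 h.2, ?_⟩,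
    fun ψ hψ => ⟨(hmin ψ hψ).1.2, hmin ψ hψ⟩⟩
  rintro ⟨ψ, hψ, rfl⟩
  exact ⟨hmin ψ hψ, height_graphIdeal k ψ⟩

/-- Let `Q`, `P` be finite nonempty posets, `Q` with a unique maximal or a unique
minimal element.  Then the height of `L(Q,P)` is `|P|`, the minimal primes of `L(Q,P)`
of height `|P|` are exactly the ideals `p_ψ = (x_{(ψ(p),p)} : p ∈ P)` for isotone
`ψ : P → Q`; in particular `L(Q,P) ⊆ p_ψ` and each `p_ψ` is a minimal prime of `L(Q,P)`. -/
theorem letterplace_minimal_primes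
    (k : Type*) [Field k]
    {Q P : Type*} [PartialOrder Q] [Fintype Q] [Nonempty Q]
    [PartialOrder P] [Fintype P] [Nonempty P]
    (hQ : (∃! m : Q, IsMax m) ∨ (∃! m : Q, IsMin m))
    (L : Ideal (MvPolynomial (Q × P) k))
    (hL : L = Ideal.span
      { m | ∃ φ : Q → P, Monotone φ ∧ m = ∏ q : Q, X (q, φ q) }) :
    idealHeight L = (Fintype.card P : ℕ∞)
    ∧ (∀ 𝔭 : Ideal (MvPolynomial (Q × P) k),
        (𝔭 ∈ L.minimalPrimes ∧ idealHeight 𝔭 = (Fintype.card P : ℕ∞)) ↔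
          ∃ ψ : P → Q, Monotone ψ ∧
            𝔭 = Ideal.span (Set.range fun p : P => (X (ψ p, p) : MvPolynomial (Q × P) k)))
    ∧ (∀ ψ : P → Q, Monotone ψ →
        L ≤ Ideal.span (Set.range fun p : P => (X (ψ p, p) : MvPolynomial (Q × P) k))
        ∧ Ideal.span (Set.range fun p : P => (X (ψ p, p) : MvPolynomial (Q × P) k))
            ∈ L.minimalPrimes) :=
  letterplace_minimal_primes_general k hQ L hL
end

section
/- Let P be a finite nonempty poset and n ≥ 2. The multichain ideal I(n,P) ⊆ k[x_P] is equal to the n-th power of the maximal ideal (x_p : p ∈ P) if and only if P is totally ordered. -/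
open MvPolynomial

private theorem exists_monotone_perm {P : Type*} [PartialOrder P]
    (htot : ∀ p q : P, p ≤ q ∨ q ≤ p) {n : ℕ} (f : Fin n → P) :
    ∃ c : Fin n → P, Monotone c ∧ (List.ofFn c).Perm (List.ofFn f) := by
  classical
  letI : IsTotal P (· ≤ ·) := ⟨htot⟩
  set l := List.insertionSort (· ≤ ·) (List.ofFn f) with hl
  have hperm : l.Perm (List.ofFn f) := List.perm_insertionSort _ _
  have hsort : l.Pairwise (· ≤ ·) := List.pairwise_insertionSort _ _
  have hlen : l.length = n := by rw [hperm.length_eq, List.length_ofFn]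
  refine ⟨fun i => l.get (Fin.cast hlen.symm i), ?_, ?_⟩
  · intro i j hij
    exact hsort.rel_get_of_le (by rw [Fin.le_def]; exact hij)
  · have : List.ofFn (fun i => l.get (Fin.cast hlen.symm i)) = l := by
      apply List.ext_get
      · simp [hlen]
      · intro i h1 h2
        simp [List.get_ofFn]
    rw [this]; exact hperm

private theorem prodX_eq_monomial {k : Type*} [CommSemiring k] {P : Type*} {n : ℕ}
    (c : Fin n → P) :
    (∏ i : Fin n, (X (c i) : MvPolynomial P k)) =
      monomial (∑ i : Fin n, Finsupp.single (c i) 1) (1 : k) := by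
  rw [monomial_sum_one]
  rfl

private theorem prod_mem_pow_span {k : Type*} [CommSemiring k] {P : Type*} {n : ℕ}
    (c : Fin n → P) :
    (∏ i : Fin n, (X (c i) : MvPolynomial P k)) ∈
      (Ideal.span (Set.range (X : P → MvPolynomial P k))) ^ n := by
  have := Ideal.prod_mem_prod (s := (Finset.univ : Finset (Fin n)))
    (I := fun _ => Ideal.span (Set.range (X : P → MvPolynomial P k)))
    (x := fun i => X (c i)) (fun i _ => Ideal.subset_span ⟨c i, rfl⟩)
  simpa using this

private theorem pow_span_le {k : Type*} [CommSemiring k] {P : Type*} (n : ℕ) :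
    (Ideal.span (Set.range (X : P → MvPolynomial P k))) ^ n ≤
      Ideal.span { m | ∃ f : Fin n → P, m = ∏ i : Fin n, X (f i) } := by
  induction n with
  | zero =>
    rw [pow_zero]
    rw [Ideal.one_eq_top, top_le_iff, Ideal.eq_top_iff_one]
    exact Ideal.subset_span ⟨Fin.elim0, by simp⟩
  | succ m ih =>
    rw [pow_succ]
    calc (Ideal.span (Set.range (X : P → MvPolynomial P k))) ^ m *
          Ideal.span (Set.range (X : P → MvPolynomial P k))
        ≤ Ideal.span { x | ∃ f : Fin m → P, x = ∏ i : Fin m, X (f i) } *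
          Ideal.span (Set.range (X : P → MvPolynomial P k)) :=
          Ideal.mul_mono_left ih
      _ ≤ Ideal.span { x | ∃ f : Fin (m+1) → P, x = ∏ i : Fin (m+1), X (f i) } := by
          rw [Ideal.span_mul_span']
          apply Ideal.span_le.mpr
          rintro x hx
          rw [Set.mem_mul] at hx
          obtain ⟨a, ⟨f, rfl⟩, b, ⟨p, rfl⟩, rfl⟩ := hx
          refine Ideal.subset_span ⟨Fin.snoc f p, ?_⟩
          rw [Fin.prod_univ_castSucc]
          simp [Fin.snoc_castSucc, Fin.snoc_last]

/-- For a finite nonempty poset `P` and `n ≥ 2`, the multichain ideal `I(n,P)` equals the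
`n`-th power of the maximal ideal `(x_p : p ∈ P)` iff `P` is totally ordered. -/
theorem multichain_ideal_eq_power_of_max_ideal_iff_total
    (k : Type*) [Field k]
    {P : Type*} [PartialOrder P] [Fintype P] [Nonempty P]
    (n : ℕ) (hn : 2 ≤ n)
    (I : Ideal (MvPolynomial P k))
    (hI : I = Ideal.span
      { m | ∃ c : Fin n → P, Monotone c ∧ m = ∏ i : Fin n, X (c i) }) :
    I = (Ideal.span (Set.range (X : P → MvPolynomial P k))) ^ n ↔
      ∀ p q : P, p ≤ q ∨ q ≤ p := by
  classical
  subst hI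
  constructor
  · intro h p q
    by_contra hc
    push_neg at hc
    obtain ⟨hpq, hqp⟩ := hc
    have hne : p ≠ q := by rintro rfl; exact hpq le_rfl
    set d : P →₀ ℕ := Finsupp.single p (n-1) + Finsupp.single q 1 with hd
    have hmem : (monomial d (1:k)) ∈
        (Ideal.span (Set.range (X : P → MvPolynomial P k))) ^ n := by
      have heq : (monomial d (1:k)) = X p ^ (n-1) * X q := by
        rw [X_pow_eq_monomial, hd]
        rw [show (X q : MvPolynomial P k) = monomial (Finsupp.single q 1) 1 from rfl]
        rw [monomial_mul, one_mul]
      rw [heq]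
      have h1 : (X p : MvPolynomial P k) ^ (n-1) ∈
          (Ideal.span (Set.range (X : P → MvPolynomial P k))) ^ (n-1) :=
        Ideal.pow_mem_pow (Ideal.subset_span (Set.mem_range_self p)) _
      have h2 : (X q : MvPolynomial P k) ∈
          Ideal.span (Set.range (X : P → MvPolynomial P k)) :=
        Ideal.subset_span ⟨q, rfl⟩
      have := Ideal.mul_mem_mul h1 h2
      rwa [← pow_succ, Nat.sub_add_cancel (by omega)] at this
    rw [← h] at hmem
    have hsets : { m : MvPolynomial P k | ∃ c : Fin n → P, Monotone c ∧
          m = ∏ i : Fin n, X (c i) } =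
        (fun s => monomial s (1:k)) ''
          { d | ∃ c : Fin n → P, Monotone c ∧ d = ∑ i : Fin n, Finsupp.single (c i) 1 } := by
      ext m
      constructor
      · rintro ⟨c, hc, rfl⟩
        exact ⟨∑ i : Fin n, Finsupp.single (c i) 1, ⟨c, hc, rfl⟩,
          (prodX_eq_monomial c).symm⟩
      · rintro ⟨s, ⟨c, hc, rfl⟩, rfl⟩
        exact ⟨c, hc, (prodX_eq_monomial c).symm⟩
    rw [hsets, mem_ideal_span_monomial_image] at hmem
    have hsup : d ∈ (monomial d (1:k)).support := by
      rw [support_monomial, if_neg one_ne_zero]; exact Finset.mem_singleton_self d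
    obtain ⟨d', ⟨c, hc, rfl⟩, hle⟩ := hmem d hsup
    -- every c j is p or q
    have hval : ∀ j : Fin n, c j = p ∨ c j = q := by
      intro j
      have h1 : 1 ≤ (∑ i : Fin n, Finsupp.single (c i) 1) (c j) := by
        rw [Finsupp.finset_sum_apply]
        calc 1 = Finsupp.single (c j) 1 (c j) := by simp
          _ ≤ ∑ i : Fin n, Finsupp.single (c i) 1 (c j) :=
            Finset.single_le_sum (f := fun i => (Finsupp.single (c i) 1 : P →₀ ℕ) (c j))
              (fun i _ => Nat.zero_le _) (Finset.mem_univ j)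
      have h2 : (∑ i : Fin n, Finsupp.single (c i) 1) (c j) ≤ d (c j) :=
        Finsupp.le_def.mp hle (c j)
      by_contra hcon
      push_neg at hcon
      have hz : d (c j) = 0 := by
        rw [hd]
        simp [Finsupp.single_apply, Ne.symm hcon.1, Ne.symm hcon.2]
      omega
    set i0 : Fin n := ⟨0, by omega⟩ with hi0
    have hconst : ∀ j : Fin n, c j = c i0 := by
      intro j
      have hle0 : c i0 ≤ c j := hc (by simp [hi0, Fin.le_def])
      rcases hval i0 with h0 | h0 <;> rcases hval j with hj | hj
      · rw [h0, hj]
      · rw [h0, hj] at hle0; exact absurd hle0 hpq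
      · rw [h0, hj] at hle0; exact absurd hle0 hqp
      · rw [h0, hj]
    have hdval : (∑ i : Fin n, Finsupp.single (c i) 1) (c i0) = n := by
      rw [Finsupp.finset_sum_apply]
      have : ∀ i : Fin n, Finsupp.single (c i) 1 (c i0) = 1 := by
        intro i; rw [hconst i]; simp
      simp [this]
    have h2 : (∑ i : Fin n, Finsupp.single (c i) 1) (c i0) ≤ d (c i0) :=
      Finsupp.le_def.mp hle (c i0)
    rw [hdval] at h2
    rcases hval i0 with h0 | h0 <;> rw [h0] at h2
    · have : d p = n - 1 := by rw [hd]; simp [Finsupp.single_apply, Ne.symm hne]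
      omega
    · have : d q = 1 := by rw [hd]; simp [Finsupp.single_apply, hne]
      omega
  · intro htot
    apply le_antisymm
    · apply Ideal.span_le.mpr
      rintro m ⟨c, _, rfl⟩
      exact prod_mem_pow_span c
    · refine le_trans (pow_span_le n) (Ideal.span_le.mpr ?_)
      rintro m ⟨f, rfl⟩
      obtain ⟨c, hmono, hperm⟩ := exists_monotone_perm htot f
      refine Ideal.subset_span ⟨c, hmono, ?_⟩
      have := (hperm.map (X : P → MvPolynomial P k)).prod_eq
      rw [List.map_ofFn, List.map_ofFn, List.prod_ofFn, List.prod_ofFn] at this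
      exact this.symm
end

section
/- Let Q and P be finite posets and let I ⊆ k[x_{Q×P}] be the ideal generated by a subset of the monomials m_{Γφ}, φ ∈ Hom(Q,P). Then I is unseparable: there is no surjection π : R′ → Q×P from a set R′ of cardinality |Q×P| + 1 (with a ≠ b the two elements of R′ having the same image (q,p), π injective elsewhere) together with a monomial ideal J ⊆ k[x_{R′}] such that (i) the ring map k[x_{R′}] → k[x_{Q×P}] induced by π maps J onto I, (ii) x_a divides some minimal monomial generator of J and likewise x_b, and (iii) x_a − x_b is a regular element (nonzerodivisor) on k[x_{R′}]/J. -/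
/-!
If `m_d` is a minimal generator of `J` divisible by `x_a`, then `m_d = x_a m_{d'}` with `m_{d'}`
avoiding the whole row `{(π a).1} × P`. Otherwise deleting part of that row from `d` leaves a
monomial whose image still contains some `m_{Γφ}`; lifting that back to `J` gives either a proper
divisor of `m_d` or a divisor of `x_b m_d / x_a`, and the latter is impossible because `x_a` and
`x_b` times `m_d / x_a` in `J` would put `m_d / x_a` in `J` by regularity of `x_a - x_b`.
Doing the same for `x_b`, the lcm `m` of the two cofactors avoids that row while `x_a m` and
`x_b m` lie in `J`, so `m ∈ J`; but then `π(m)` is divisible by some `m_{Γφ}`, which meets every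
row.
-/

open MvPolynomial

theorem Finsupp.mapDomain_apply_eq_sum_filter {α β M : Type*} [Fintype α] [DecidableEq β]
    [AddCommMonoid M] (f : α → β) (u : α →₀ M) (y : β) :
    u.mapDomain f y = ∑ x with f x = y, u x := by
  rw [mapDomain, sum_apply, sum_fintype _ _ (by simp)]
  simp [single_apply, Finset.sum_ite]

def GluesExactly {R Y : Type*} (π : R → Y) (a b : R) : Prop :=
  a ≠ b ∧ π a = π b ∧ ∀ x y, x ≠ y → π x = π y → ({x, y} : Set R) = {a, b}

namespace GluesExactly

variable {R Y : Type*} {π : R → Y} {a b : R}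

theorem symm (h : GluesExactly π a b) : GluesExactly π b a :=
  ⟨h.1.symm, h.2.1.symm, fun x y hxy hπ => by rw [h.2.2 x y hxy hπ, Set.pair_comm]⟩

theorem eq_or_eq_of_apply_eq (h : GluesExactly π a b) {x : R} (hx : π x = π a) :
    x = a ∨ x = b := by
  by_cases hxa : x = a
  · exact Or.inl hxa
  · have : x ∈ ({a, b} : Set R) := h.2.2 x a hxa hx ▸ Set.mem_insert x {a}
    simpa [hxa] using this

theorem eq_of_apply_eq (h : GluesExactly π a b) {x r : R} (hra : r ≠ a) (hrb : r ≠ b)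
    (hx : π x = π r) : x = r := by
  by_contra hxr
  have : r ∈ ({a, b} : Set R) := h.2.2 x r hxr hx ▸ Set.mem_insert_of_mem x rfl
  rcases this with rfl | rfl <;> contradiction

variable [Fintype R]

theorem mapDomain_apply_left (h : GluesExactly π a b) (u : R →₀ ℕ) :
    u.mapDomain π (π a) = u a + u b := by
  classical
  have hfib : ({x | π x = π a} : Finset R) = {a, b} := by
    ext x
    simp only [Finset.mem_filter, Finset.mem_univ, true_and, Finset.mem_insert,
      Finset.mem_singleton]
    exact ⟨h.eq_or_eq_of_apply_eq, by rintro (rfl | rfl) <;> [rfl; exact h.2.1.symm]⟩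
  rw [Finsupp.mapDomain_apply_eq_sum_filter, hfib, Finset.sum_pair h.1]

theorem mapDomain_apply_of_ne (h : GluesExactly π a b) (u : R →₀ ℕ) {r : R} (hra : r ≠ a)
    (hrb : r ≠ b) : u.mapDomain π (π r) = u r := by
  classical
  have hfib : ({x | π x = π r} : Finset R) = {r} := by
    ext x
    simp only [Finset.mem_filter, Finset.mem_univ, true_and, Finset.mem_singleton]
    exact ⟨h.eq_of_apply_eq hra hrb, by rintro rfl; rfl⟩
  rw [Finsupp.mapDomain_apply_eq_sum_filter, hfib, Finset.sum_singleton]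

theorem le_of_mapDomain_le (h : GluesExactly π a b) {s u : R →₀ ℕ}
    (hsu : s.mapDomain π ≤ u.mapDomain π) :
    (∀ r, r ≠ a → r ≠ b → s r ≤ u r) ∧ s a + s b ≤ u a + u b := by
  refine ⟨fun r hra hrb => ?_, ?_⟩
  · simpa only [h.mapDomain_apply_of_ne _ hra hrb] using hsu (π r)
  · simpa only [h.mapDomain_apply_left] using hsu (π a)

end GluesExactly

section MonomialIdeal

variable {σ τ R : Type*} [CommSemiring R]

theorem monomial_one_mem_span_monomial_iff [Nontrivial R] {D : Set (σ →₀ ℕ)} {m : σ →₀ ℕ} :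
    monomial m (1 : R) ∈ Ideal.span ((fun s => monomial s 1) '' D) ↔ ∃ s ∈ D, s ≤ m := by
  classical
  rw [mem_ideal_span_monomial_image, support_monomial, if_neg one_ne_zero]
  simp

theorem monomial_one_mem_of_le {J : Ideal (MvPolynomial σ R)} {s m : σ →₀ ℕ} (hsm : s ≤ m)
    (hs : monomial s (1 : R) ∈ J) : monomial m (1 : R) ∈ J :=
  J.mem_of_dvd (monomial_dvd_monomial.mpr ⟨Or.inr hsm, one_dvd 1⟩) hs

theorem monomial_one_mem_map_rename {J : Ideal (MvPolynomial σ R)} (π : σ → τ) {s : σ →₀ ℕ}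
    (hs : monomial s (1 : R) ∈ J) : monomial (s.mapDomain π) (1 : R) ∈ J.map (rename π) := by
  simpa only [rename_monomial] using Ideal.mem_map_of_mem (rename π) hs

theorem exists_monomial_one_mem_of_mem_map_rename [Nontrivial R] {D : Set (σ →₀ ℕ)}
    (π : σ → τ) {w : τ →₀ ℕ}
    (hw : monomial w (1 : R) ∈ (Ideal.span ((fun s => monomial s 1) '' D)).map (rename π)) :
    ∃ s, monomial s (1 : R) ∈ Ideal.span ((fun s => monomial s 1) '' D) ∧
      s.mapDomain π ≤ w := by
  rw [Ideal.map_span, Set.image_image] at hw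
  simp only [rename_monomial] at hw
  rw [← Set.image_image (g := fun s => monomial s (1 : R)), monomial_one_mem_span_monomial_iff]
    at hw
  obtain ⟨_, ⟨s, hs, rfl⟩, hsw⟩ := hw
  exact ⟨s, Ideal.subset_span ⟨s, hs, rfl⟩, hsw⟩

def IsMinimalMonomial (J : Ideal (MvPolynomial σ R)) (d : σ →₀ ℕ) : Prop :=
  monomial d (1 : R) ∈ J ∧ ∀ d' ≤ d, monomial d' (1 : R) ∈ J → d' = d

theorem IsMinimalMonomial.sub_single_add_single_notMem {J : Ideal (MvPolynomial σ R)} {a b : σ}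
    (hJ : ∀ s : σ →₀ ℕ, monomial (s + Finsupp.single a 1) (1 : R) ∈ J →
      monomial (s + Finsupp.single b 1) (1 : R) ∈ J → monomial s (1 : R) ∈ J)
    {d : σ →₀ ℕ} (hd : IsMinimalMonomial J d) (hda : 0 < d a) :
    monomial (d - Finsupp.single a 1 + Finsupp.single b 1) (1 : R) ∉ J := by
  intro hb
  have hd₀ : d - Finsupp.single a 1 + Finsupp.single a 1 = d :=
    tsub_add_cancel_of_le (Finsupp.single_le_iff.mpr hda)
  have heq := hd.2 _ tsub_le_self (hJ _ (by rw [hd₀]; exact hd.1) hb)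
  have := congrArg (· a) heq
  simp only [Finsupp.tsub_apply, Finsupp.single_eq_same] at this
  omega

end MonomialIdeal

theorem monomial_one_mem_of_regular_X_sub_X {σ R : Type*} [CommRing R]
    {J : Ideal (MvPolynomial σ R)} {a b : σ}
    (hreg : ∀ f : MvPolynomial σ R, (X a - X b) * f ∈ J → f ∈ J) {s : σ →₀ ℕ}
    (ha : monomial (s + Finsupp.single a 1) (1 : R) ∈ J)
    (hb : monomial (s + Finsupp.single b 1) (1 : R) ∈ J) : monomial s (1 : R) ∈ J := by
  apply hreg
  rw [monomial_add_single, pow_one] at ha hb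
  rw [sub_mul, mul_comm, mul_comm (X b)]
  exact sub_mem ha hb

section Graph

variable {Q P : Type*} [Fintype Q]

noncomputable def graphExp (φ : Q → P) : Q × P →₀ ℕ :=
  ∑ q, Finsupp.single (q, φ q) 1

theorem graphExp_apply [DecidableEq P] (φ : Q → P) (y : Q × P) :
    graphExp φ y = if φ y.1 = y.2 then 1 else 0 := by
  classical
  rw [graphExp, Finsupp.finsetSum_apply, Finset.sum_eq_single y.1]
  · simp [Finsupp.single_apply, Prod.ext_iff]
  · intro q _ hq
    simp [Prod.ext_iff, hq]
  · simp

theorem prod_X_eq_monomial_graphExp {R : Type*} [CommSemiring R] (φ : Q → P) :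
    ∏ q, (X (q, φ q) : MvPolynomial (Q × P) R) = monomial (graphExp φ) 1 := by
  rw [graphExp, monomial_sum_one]
  rfl

theorem monomial_one_mem_span_prod_X_iff {R : Type*} [CommSemiring R] [Nontrivial R]
    (G : Set (Q → P)) (w : Q × P →₀ ℕ) :
    monomial w (1 : R) ∈ Ideal.span ((fun φ : Q → P => ∏ q : Q, X (q, φ q)) '' G) ↔
      ∃ φ ∈ G, graphExp φ ≤ w := by
  simp_rw [prod_X_eq_monomial_graphExp]
  rw [← Set.image_image (fun s => monomial s (1 : R)) graphExp,
    monomial_one_mem_span_monomial_iff]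
  simp

end Graph

theorem Finsupp.le_mapDomain_of_eq_off {α β : Type*} [Fintype α] {f : α → β} {g : β →₀ ℕ}
    {d u : α →₀ ℕ} (S : Set β) (hg : g ≤ d.mapDomain f) (hud : ∀ x, f x ∉ S → u x = d x)
    (hS : ∀ y ∈ S, g y ≤ u.mapDomain f y) : g ≤ u.mapDomain f := by
  classical
  intro y
  by_cases hy : y ∈ S
  · exact hS y hy
  · have hfib : u.mapDomain f y = d.mapDomain f y := by
      simp only [Finsupp.mapDomain_apply_eq_sum_filter]
      refine Finset.sum_congr rfl fun x hx => hud x ?_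
      rwa [(Finset.mem_filter.mp hx).2]
    exact hfib ▸ hg y

section Separation

variable {k Q P R : Type*} [CommSemiring k] [Nontrivial k] [Fintype R]
  {π : R → Q × P} {a b : R} {J : Ideal (MvPolynomial R k)} {D : Set (R →₀ ℕ)}
  {G : Set (Q → P)} {d : R →₀ ℕ}

theorem IsMinimalMonomial.eq_of_le_of_mem_map (hπ : GluesExactly π a b)
    (hD : J = Ideal.span ((fun s => monomial s 1) '' D))
    (hJ : ∀ s : R →₀ ℕ, monomial (s + Finsupp.single a 1) (1 : k) ∈ J →
      monomial (s + Finsupp.single b 1) (1 : k) ∈ J → monomial s (1 : k) ∈ J)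
    (hd : IsMinimalMonomial J d) (hda : 0 < d a) {u : R →₀ ℕ} (hud : u ≤ d) (hua : u a ≤ 1)
    (hub : u b = 0) (hu : monomial (u.mapDomain π) (1 : k) ∈ J.map (rename π)) : u = d := by
  subst hD
  obtain ⟨s, hs, hsu⟩ := exists_monomial_one_mem_of_mem_map_rename π hu
  obtain ⟨hoff, hsab⟩ := hπ.le_of_mapDomain_le hsu
  rcases Nat.eq_zero_or_pos (s b) with hsb | hsb
  · have hsu : s ≤ u := fun r => by
      rcases eq_or_ne r a with rfl | hra
      · omega
      rcases eq_or_ne r b with rfl | hrb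
      · omega
      exact hoff r hra hrb
    exact le_antisymm hud (hd.2 s (hsu.trans hud) hs ▸ hsu)
  · classical
    refine absurd (monomial_one_mem_of_le (fun r => ?_) hs)
      (hd.sub_single_add_single_notMem hJ hda)
    have hur := hud r
    simp only [Finsupp.add_apply, Finsupp.tsub_apply, Finsupp.single_apply]
    rcases eq_or_ne r a with rfl | hra
    · simp only [if_true]
      omega
    rcases eq_or_ne r b with rfl | hrb
    · simp only [if_true, if_neg hra.symm]
      omega
    simp only [if_neg hra.symm, if_neg hrb.symm]
    have := hoff r hra hrb
    omega

theorem IsMinimalMonomial.apply_fst_eq_snd_of_graphExp_le [Fintype Q] (hπ : GluesExactly π a b)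
    (hD : J = Ideal.span ((fun s => monomial s 1) '' D))
    (hJ : ∀ s : R →₀ ℕ, monomial (s + Finsupp.single a 1) (1 : k) ∈ J →
      monomial (s + Finsupp.single b 1) (1 : k) ∈ J → monomial s (1 : k) ∈ J)
    (hGen : ∀ w, monomial w (1 : k) ∈ J.map (rename π) ↔ ∃ φ ∈ G, graphExp φ ≤ w)
    (hd : IsMinimalMonomial J d) (hda : 0 < d a) {φ : Q → P} (hφG : φ ∈ G)
    (hφd : graphExp φ ≤ d.mapDomain π) : φ (π a).1 = (π a).2 := by
  classical
  by_contra hne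
  set u := (d.erase a).erase b
  have hu : u = d := by
    refine hd.eq_of_le_of_mem_map hπ hD hJ hda ?_ (by simp [u, hπ.1]) (by simp [u])
      ((hGen _).2 ⟨φ, hφG, Finsupp.le_mapDomain_of_eq_off {π a} hφd (fun x hx => ?_) ?_⟩)
    · intro r
      simp only [u, Finsupp.erase_apply]
      split_ifs <;> omega
    · have hxa : x ≠ a := by rintro rfl; exact hx rfl
      have hxb : x ≠ b := by rintro rfl; exact hx hπ.2.1.symm
      simp [u, Finsupp.erase_ne hxa, Finsupp.erase_ne hxb]
    · rintro _ rfl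
      simp [graphExp_apply, hne]
  have := congrArg (· a) hu
  simp [u, hπ.1] at this
  omega

theorem IsMinimalMonomial.exists_eq_add_single [Fintype Q] (hπ : GluesExactly π a b)
    (hD : J = Ideal.span ((fun s => monomial s 1) '' D))
    (hJ : ∀ s : R →₀ ℕ, monomial (s + Finsupp.single a 1) (1 : k) ∈ J →
      monomial (s + Finsupp.single b 1) (1 : k) ∈ J → monomial s (1 : k) ∈ J)
    (hGen : ∀ w, monomial w (1 : k) ∈ J.map (rename π) ↔ ∃ φ ∈ G, graphExp φ ≤ w)
    (hd : IsMinimalMonomial J d) (hda : 0 < d a) :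
    ∃ d', (∀ r, (π r).1 = (π a).1 → d' r = 0) ∧ d = d' + Finsupp.single a 1 := by
  classical
  obtain ⟨φ, hφG, hφd⟩ := (hGen _).1 (monomial_one_mem_map_rename π hd.1)
  have hφa := hd.apply_fst_eq_snd_of_graphExp_le hπ hD hJ hGen hda hφG hφd
  have hrow_b : (π b).1 = (π a).1 := congrArg Prod.fst hπ.2.1.symm
  set d' := d.filter fun r => (π r).1 ≠ (π a).1
  have hd'row : ∀ r, (π r).1 = (π a).1 → d' r = 0 :=
    fun r hr => Finsupp.filter_apply_neg _ _ (not_not.mpr hr)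
  refine ⟨d', hd'row, (hd.eq_of_le_of_mem_map hπ hD hJ hda (fun r => ?_) ?_ ?_ ((hGen _).2
    ⟨φ, hφG, Finsupp.le_mapDomain_of_eq_off {y | y.1 = (π a).1} hφd (fun x hx => ?_) ?_⟩)).symm⟩
  · rcases eq_or_ne r a with rfl | hra
    · simp [hd'row r rfl]
      omega
    · simp [hra.symm, d', Finsupp.filter_apply]
      split_ifs <;> omega
  · simp [hd'row a rfl]
  · simp [hd'row b hrow_b, hπ.1]
  · have hxa : a ≠ x := by rintro rfl; exact hx rfl
    simpa [d', hxa] using Finsupp.filter_apply_pos _ d (show (π x).1 ≠ (π a).1 from hx)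
  · rintro y (hy : y.1 = (π a).1)
    by_cases hya : y = π a
    · subst hya
      rw [hπ.mapDomain_apply_left, graphExp_apply]
      simp [hd'row a rfl, hd'row b hrow_b, hπ.1, hφa]
    · rw [graphExp_apply, if_neg]
      · exact Nat.zero_le _
      · intro h
        exact hya (Prod.ext hy (by rw [← h, hy, hφa]))

end Separation

theorem subideal_of_letterplace_unseparable_general
    (k : Type*) [Field k]
    {Q P : Type*} [Fintype Q]
    (G : Set (Q → P))
    (I : Ideal (MvPolynomial (Q × P) k))
    (hI : I = Ideal.span ((fun φ : Q → P => ∏ q : Q, X (q, φ q)) '' G))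
    {R' : Type*} [Fintype R']
    (π : R' → Q × P)
    (a b : R') (hab : a ≠ b) (hπab : π a = π b)
    (hπinj : ∀ x y : R', x ≠ y → π x = π y → ({x, y} : Set R') = {a, b})
    (J : Ideal (MvPolynomial R' k))
    (hJmono : ∃ D : Set (R' →₀ ℕ),
      J = Ideal.span ((fun d => monomial d (1 : k)) '' D))
    (hmap : Ideal.map (rename π) J = I)
    (hgena : ∃ d : R' →₀ ℕ, monomial d (1 : k) ∈ J ∧ 0 < d a ∧
      ∀ d' ≤ d, monomial d' (1 : k) ∈ J → d' = d)
    (hgenb : ∃ d : R' →₀ ℕ, monomial d (1 : k) ∈ J ∧ 0 < d b ∧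
      ∀ d' ≤ d, monomial d' (1 : k) ∈ J → d' = d)
    (hreg : ∀ f : MvPolynomial R' k, (X a - X b) * f ∈ J → f ∈ J) :
    False := by
  classical
  obtain ⟨D, hD⟩ := hJmono
  have hπ : GluesExactly π a b := ⟨hab, hπab, hπinj⟩
  have hJ : ∀ s : R' →₀ ℕ, monomial (s + Finsupp.single a 1) (1 : k) ∈ J →
      monomial (s + Finsupp.single b 1) (1 : k) ∈ J → monomial s (1 : k) ∈ J :=
    fun _ => monomial_one_mem_of_regular_X_sub_X hreg
  have hGen (w) : monomial w (1 : k) ∈ J.map (rename π) ↔ ∃ φ ∈ G, graphExp φ ≤ w := by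
    rw [hmap, hI, monomial_one_mem_span_prod_X_iff]
  obtain ⟨_, hdJ, hda, hdmin⟩ := hgena
  obtain ⟨d, hdrow, rfl⟩ := IsMinimalMonomial.exists_eq_add_single hπ hD hJ hGen ⟨hdJ, hdmin⟩ hda
  obtain ⟨_, heJ, heb, hemin⟩ := hgenb
  obtain ⟨e, herow, rfl⟩ := IsMinimalMonomial.exists_eq_add_single hπ.symm hD
    (fun s ha hb => hJ s hb ha) hGen ⟨heJ, hemin⟩ heb
  have hg : monomial (d ⊔ e) (1 : k) ∈ J :=
    hJ _ (monomial_one_mem_of_le (add_le_add le_sup_left le_rfl) hdJ)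
      (monomial_one_mem_of_le (add_le_add le_sup_right le_rfl) heJ)
  obtain ⟨φ, -, hφ⟩ := (hGen _).1 (monomial_one_mem_map_rename π hg)
  have hrow : (d ⊔ e).mapDomain π ((π a).1, φ (π a).1) = 0 := by
    rw [Finsupp.mapDomain_apply_eq_sum_filter]
    refine Finset.sum_eq_zero fun x hx => ?_
    have hx : (π x).1 = (π a).1 := by rw [(Finset.mem_filter.mp hx).2]
    simp [hdrow x hx, herow x (hπab ▸ hx)]
  simpa [graphExp_apply, hrow] using hφ ((π a).1, φ (π a).1)

/-- An ideal generated by a subset of the generators `m_{Γφ}`, `φ ∈ Hom(Q,P)`,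
of `L(Q,P)` is unseparable: it admits no separation. -/
theorem subideal_of_letterplace_unseparable
    (k : Type*) [Field k]
    {Q P : Type*} [PartialOrder Q] [Fintype Q] [PartialOrder P] [Fintype P]
    (G : Set (Q → P)) (hG : ∀ φ ∈ G, Monotone φ)
    (I : Ideal (MvPolynomial (Q × P) k))
    (hI : I = Ideal.span ((fun φ : Q → P => ∏ q : Q, X (q, φ q)) '' G))
    {R' : Type*} [Fintype R']
    (π : R' → Q × P) (hπsurj : Function.Surjective π)
    (a b : R') (hab : a ≠ b) (hπab : π a = π b)
    (hcard : Fintype.card R' = Fintype.card (Q × P) + 1)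
    (hπinj : ∀ x y : R', x ≠ y → π x = π y → ({x, y} : Set R') = {a, b})
    (J : Ideal (MvPolynomial R' k))
    (hJmono : ∃ D : Set (R' →₀ ℕ),
      J = Ideal.span ((fun d => monomial d (1 : k)) '' D))
    (hmap : Ideal.map (rename π) J = I)
    (hgena : ∃ d : R' →₀ ℕ, monomial d (1 : k) ∈ J ∧ 0 < d a ∧
      ∀ d' ≤ d, monomial d' (1 : k) ∈ J → d' = d)
    (hgenb : ∃ d : R' →₀ ℕ, monomial d (1 : k) ∈ J ∧ 0 < d b ∧
      ∀ d' ≤ d, monomial d' (1 : k) ∈ J → d' = d)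
    (hreg : ∀ f : MvPolynomial R' k, (X a - X b) * f ∈ J → f ∈ J) :
    False :=
  subideal_of_letterplace_unseparable_general k G I hI π a b hab hπab hπinj J hJmono hmap hgena
    hgenb hreg
end

section
/- Let P and R be finite posets, n ≥ 1, and let φ : [n]×P → R be an isotone map whose fibers are bistrict chains in [n]×P^op. Let L^φ(n,P) ⊆ k[x_R] be the ideal generated by the image of L(n,P) under the ring map x_{(i,p)} ↦ x_{φ(i,p)}, and let L^{φ^τ}(P,n) ⊆ k[x_R] be the ideal generated by the image of L(P,n) under the ring map x_{(p,i)} ↦ x_{φ(i,p)}. Then L^φ(n,P) and L^{φ^τ}(P,n) are Alexander dual: a monomial m of k[x_R] lies in L^{φ^τ}(P,n) if and only if m has a nontrivial common divisor with every monomial of L^φ(n,P). -/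
/-!
The bistrict fibers make `p ↦ φ (ψ p, p)` injective for every isotone `ψ : P → [n]`, so the
generators of `L^{φ^τ}(P,n)` are squarefree and `m_d` lies in it iff `supp d` contains such a
transposed graph. The theorem thus reduces to the set-level duality of letterplace ideals: a set
`T ⊆ [n] × P` meets the graph of every isotone `c : [n] → P` iff it contains the transposed graph
of an isotone `ψ : P → [n]`. One direction is a fixed point of `ψ ∘ c`; for the other, let `ψ p`
be the length of the longest chain below `p` whose graph avoids `T`.
-/

open MvPolynomial

namespace Finsupp
variable {α σ : Type*} [Fintype α] (f : α → σ)

theorem toMultiset_sum_single_one :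
    toMultiset (∑ a, single (f a) 1) = Finset.univ.val.map f := by
  simp only [toMultiset_sum, toMultiset_single, one_nsmul]
  rw [Finset.sum_eq_multiset_sum, ← Multiset.sum_map_singleton (Finset.univ.val.map f),
    Multiset.map_map]; rfl

theorem mem_support_sum_single_one {r : σ} :
    r ∈ (∑ a, single (f a) 1).support ↔ ∃ a, f a = r := by
  rw [← mem_toMultiset, toMultiset_sum_single_one]
  simp

theorem sum_single_one_le_iff {f : α → σ} (hf : f.Injective) {d : σ →₀ ℕ} :
    ∑ a, single (f a) 1 ≤ d ↔ ∀ a, f a ∈ d.support := by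
  classical
  rw [← orderIsoMultiset.le_iff_le, coe_orderIsoMultiset, toMultiset_sum_single_one,
    Multiset.le_iff_subset (Finset.univ.nodup.map hf)]
  simp [Multiset.subset_iff, mem_toMultiset]

theorem forall_le_exists_mem_support_iff {ι κ : Type*} [Fintype ι]
    (C : κ → Prop) (g : κ → ι → σ) (d : σ →₀ ℕ) :
    (∀ e : σ →₀ ℕ, (∃ c, C c ∧ ∑ i, single (g c i) 1 ≤ e) →
        ∃ r, r ∈ d.support ∧ r ∈ e.support) ↔
      ∀ c, C c → ∃ i, g c i ∈ d.support := by
  constructor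
  · intro h c hc
    obtain ⟨r, hrd, hr⟩ := h _ ⟨c, hc, le_rfl⟩
    obtain ⟨i, rfl⟩ := (mem_support_sum_single_one _).1 hr
    exact ⟨i, hrd⟩
  · rintro h e ⟨c, hc, hce⟩
    obtain ⟨i, hi⟩ := h c hc
    exact ⟨g c i, hi, support_mono hce ((mem_support_sum_single_one _).2 ⟨i, rfl⟩)⟩

end Finsupp

theorem MvPolynomial.prod_X_eq_monomial {R σ ι : Type*} [CommSemiring R] [Fintype ι] (f : ι → σ) :
    ∏ i, (X (f i) : MvPolynomial σ R) = monomial (∑ i, Finsupp.single (f i) 1) 1 := by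
  rw [monomial_sum_one]; rfl

theorem MvPolynomial.monomial_mem_map_rename_span_prod_X_iff {R σ τ ι κ : Type*}
    [CommSemiring R] [Nontrivial R] [Fintype ι] (C : κ → Prop) (v : κ → ι → τ) (g : τ → σ)
    (d : σ →₀ ℕ) :
    monomial d (1 : R) ∈
        Ideal.map (rename g) (Ideal.span {m | ∃ c, C c ∧ m = ∏ i, X (v c i)}) ↔
      ∃ c, C c ∧ ∑ i, Finsupp.single (g (v c i)) 1 ≤ d := by
  classical
  have hgen : {m : MvPolynomial τ R | ∃ c, C c ∧ m = ∏ i, X (v c i)} =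
      (fun c => ∏ i, X (v c i)) '' {c | C c} := by
    ext m; simp [eq_comm]
  rw [hgen, Ideal.map_span, Set.image_image]
  simp_rw [map_prod, rename_X, prod_X_eq_monomial]
  rw [← Set.image_image (fun s => monomial s (1 : R)), mem_ideal_span_monomial_image,
    support_monomial, if_neg one_ne_zero]
  simp

section LetterplaceDuality

variable {P : Type*} [Preorder P]

/-- Levels are indexed by `ℕ` so that chains of all lengths live in one type; `A i p` marks the
positions `(i, p)` a chain has to avoid. -/
def HasAvoidingChain (A : ℕ → P → Prop) (j : ℕ) (p : P) : Prop :=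
  ∃ c : ℕ → P, Monotone c ∧ c j ≤ p ∧ ∀ i < j, A i (c i)

variable {A : ℕ → P → Prop}

theorem hasAvoidingChain_zero (p : P) : HasAvoidingChain A 0 p :=
  ⟨fun _ => p, monotone_const, le_rfl, fun _ h => absurd h (Nat.not_lt_zero _)⟩

theorem HasAvoidingChain.mono {j j' : ℕ} {p p' : P} (h : HasAvoidingChain A j p)
    (hj : j' ≤ j) (hp : p ≤ p') : HasAvoidingChain A j' p' :=
  let ⟨c, hc, hcj, hA⟩ := h
  ⟨c, hc, (hc hj).trans (hcj.trans hp), fun i hi => hA i (hi.trans_le hj)⟩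

theorem HasAvoidingChain.succ {j : ℕ} {p : P} (h : HasAvoidingChain A j p) (hA : A j p) :
    HasAvoidingChain A (j + 1) p := by
  classical
  obtain ⟨c, hc, hcj, hAc⟩ := h
  refine ⟨fun i => if i < j then c i else p, fun a b hab => ?_, by simp, fun i hi => ?_⟩
  · by_cases hb : b < j
    · simp [hab.trans_lt hb, hb, hc hab]
    · by_cases ha : a < j
      · simpa [ha, hb] using (hc ha.le).trans hcj
      · simp [ha, hb]
  · rcases (Nat.lt_succ_iff.1 hi).lt_or_eq with hi | rfl
    · simpa [hi] using hAc i hi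
    · simpa using hA

theorem exists_monotone_not_of_not_hasAvoidingChain {n : ℕ}
    (h : ∀ p, ¬HasAvoidingChain A n p) :
    ∃ ψ : P → ℕ, Monotone ψ ∧ ∀ p, ψ p < n ∧ ¬A (ψ p) p := by
  classical
  have hex : ∀ p, ∃ j, ¬HasAvoidingChain A (j + 1) p :=
    fun p => ⟨n, fun hc => h p (hc.mono n.le_succ le_rfl)⟩
  have hchain : ∀ p, HasAvoidingChain A (Nat.find (hex p)) p := by
    intro p
    rcases hψ : Nat.find (hex p) with _ | j
    · exact hasAvoidingChain_zero p
    · exact not_not.1 (Nat.find_min (hex p) (hψ ▸ j.lt_succ_self))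
  refine ⟨fun p => Nat.find (hex p), fun p q hpq => ?_, fun p => ⟨?_, ?_⟩⟩
  · exact Nat.find_min' (hex p) fun hc => Nat.find_spec (hex q) (hc.mono le_rfl hpq)
  · by_contra hn
    exact h p ((hchain p).mono (not_lt.1 hn) le_rfl)
  · exact fun hA => Nat.find_spec (hex p) ((hchain p).succ hA)

theorem Fin.exists_isFixedPt_of_monotone {n : ℕ} [NeZero n] {f : Fin n → Fin n}
    (hf : Monotone f) : ∃ i, f i = i :=
  ⟨_, (OrderHom.isFixedPt_lfp ⟨f, hf⟩ :)⟩

theorem forall_monotone_exists_mem_iff_exists_monotone_forall_mem {n : ℕ} [NeZero n]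
    {T : Set (Fin n × P)} :
    (∀ c : Fin n → P, Monotone c → ∃ i, (i, c i) ∈ T) ↔
      ∃ ψ : P → Fin n, Monotone ψ ∧ ∀ p, (ψ p, p) ∈ T := by
  constructor
  · intro h
    obtain ⟨ψ, hψ, hψT⟩ := exists_monotone_not_of_not_hasAvoidingChain
      (A := fun i p => ∃ hi : i < n, (⟨i, hi⟩, p) ∉ T) (n := n) fun p ⟨c, hc, _, hA⟩ => by
        obtain ⟨i, hi⟩ := h (fun i => c i) fun a b hab => hc hab
        exact (hA i i.isLt).2 hi
    refine ⟨fun p => ⟨ψ p, (hψT p).1⟩, fun p q hpq => hψ hpq, fun p => ?_⟩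
    by_contra hp
    exact (hψT p).2 ⟨(hψT p).1, hp⟩
  · rintro ⟨ψ, hψ, hψT⟩ c hc
    obtain ⟨i, hi⟩ := Fin.exists_isFixedPt_of_monotone (hψ.comp hc)
    have hfix : ψ (c i) = i := hi
    refine ⟨i, ?_⟩
    simpa only [hfix] using hψT (c i)

end LetterplaceDuality

def HasBistrictFibers {α β γ : Type*} [Preorder α] [Preorder β] (φ : α × β → γ) : Prop :=
  ∀ v w, φ v = φ w → v ≠ w → (v.1 < w.1 ∧ w.2 < v.2) ∨ (w.1 < v.1 ∧ v.2 < w.2)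

theorem HasBistrictFibers.injective_graph {α β γ : Type*} [Preorder α] [Preorder β]
    {φ : α × β → γ} (hφ : HasBistrictFibers φ) {ψ : β → α} (hψ : Monotone ψ) :
    Function.Injective fun b => φ (ψ b, b) := by
  intro b b' hbb'
  by_contra hne
  rcases hφ (ψ b, b) (ψ b', b') hbb' (fun h => hne congr($h.2)) with ⟨hlt, hb⟩ | ⟨hlt, hb⟩
  · exact (hψ hb.le).not_gt hlt
  · exact (hψ hb.le).not_gt hlt

theorem quotient_letterplace_alexander_dual_general
    (k : Type*) [Field k]
    {P R : Type*} [PartialOrder P] [Fintype P]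
    (n : ℕ) (hn : 1 ≤ n)
    (φ : Fin n × P → R)
    (hfib : ∀ v w : Fin n × P, φ v = φ w → v ≠ w →
      (v.1 < w.1 ∧ w.2 < v.2) ∨ (w.1 < v.1 ∧ v.2 < w.2))
    (Lφ : Ideal (MvPolynomial R k))
    (hLφ : Lφ = Ideal.map (rename φ)
      (Ideal.span { m : MvPolynomial (Fin n × P) k |
        ∃ c : Fin n → P, Monotone c ∧ m = ∏ i : Fin n, X (i, c i) }))
    (Lτ : Ideal (MvPolynomial R k))
    (hLτ : Lτ = Ideal.map (rename fun v : P × Fin n => φ (v.2, v.1))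
      (Ideal.span { m : MvPolynomial (P × Fin n) k |
        ∃ c : P → Fin n, Monotone c ∧ m = ∏ p : P, X (p, c p) }))
    (d : R →₀ ℕ) :
    monomial d (1 : k) ∈ Lτ ↔
      ∀ e : R →₀ ℕ, monomial e (1 : k) ∈ Lφ →
        ∃ r : R, r ∈ d.support ∧ r ∈ e.support := by
  have : NeZero n := ⟨Nat.one_le_iff_ne_zero.1 hn⟩
  subst hLφ hLτ
  simp_rw [monomial_mem_map_rename_span_prod_X_iff,
    Finsupp.forall_le_exists_mem_support_iff]
  calc (∃ ψ : P → Fin n, Monotone ψ ∧ ∑ p, Finsupp.single (φ (ψ p, p)) 1 ≤ d)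
      ↔ ∃ ψ : P → Fin n, Monotone ψ ∧ ∀ p, (ψ p, p) ∈ φ ⁻¹' d.support :=
        exists_congr fun ψ => and_congr_right fun hψ =>
          Finsupp.sum_single_one_le_iff (HasBistrictFibers.injective_graph hfib hψ)
    _ ↔ ∀ c : Fin n → P, Monotone c → ∃ i, (i, c i) ∈ φ ⁻¹' d.support :=
        forall_monotone_exists_mem_iff_exists_monotone_forall_mem.symm

/-- If `φ : [n] × P → R` is an isotone map whose fibers are bistrict chains in
`[n] × P^op`, then `L^φ(n,P)` and `L^{φ^τ}(P,n)` are Alexander dual in `k[x_R]`. -/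
theorem quotient_letterplace_alexander_dual
    (k : Type*) [Field k]
    {P R : Type*} [PartialOrder P] [Fintype P] [PartialOrder R] [Fintype R]
    (n : ℕ) (hn : 1 ≤ n)
    (φ : Fin n × P → R) (hφ : Monotone φ)
    (hfib : ∀ v w : Fin n × P, φ v = φ w → v ≠ w →
      (v.1 < w.1 ∧ w.2 < v.2) ∨ (w.1 < v.1 ∧ v.2 < w.2))
    (Lφ : Ideal (MvPolynomial R k))
    (hLφ : Lφ = Ideal.map (rename φ)
      (Ideal.span { m : MvPolynomial (Fin n × P) k |
        ∃ c : Fin n → P, Monotone c ∧ m = ∏ i : Fin n, X (i, c i) }))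
    (Lτ : Ideal (MvPolynomial R k))
    (hLτ : Lτ = Ideal.map (rename fun v : P × Fin n => φ (v.2, v.1))
      (Ideal.span { m : MvPolynomial (P × Fin n) k |
        ∃ c : P → Fin n, Monotone c ∧ m = ∏ p : P, X (p, c p) }))
    (d : R →₀ ℕ) :
    monomial d (1 : k) ∈ Lτ ↔
      ∀ e : R →₀ ℕ, monomial e (1 : k) ∈ Lφ →
        ∃ r : R, r ∈ d.support ∧ r ∈ e.support :=
  quotient_letterplace_alexander_dual_general k n hn φ hfib Lφ hLφ Lτ hLτ d
end

section
/- Let P be a finite poset, n ≥ 1, and let 𝒥 be a poset ideal of Hom(P,[n]) with its pointwise partial order. Then the co-letterplace ideal L(𝒥) ⊆ k[x_{P×[n]}] has linear quotients: for any total order ≤ᵗ on 𝒥 extending the pointwise order, and for each φ ∈ 𝒥, the ideal quotient (ideal generated by {m_{Γψ} : ψ ∈ 𝒥, ψ <ᵗ φ}) : (m_{Γφ}) is generated by a set of variables x_{(p,i)}. -/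
/-!
If `ψ <ᵗ φ` then `φ ≰ ψ` pointwise, so `ψ p < φ p` for some `p`; for `p` minimal with this
property, lowering `φ` at `p` to `ψ p` keeps it isotone. The lowered map `φ'` lies in `𝒥`, precedes
`φ` in the total order, and `m_{Γφ'}` divides `x_{(p, ψ p)} m_{Γφ}`, while `x_{(p, ψ p)}` divides
`m_{Γψ}` but not `m_{Γφ}`. Hence the colon ideal is generated by the variables `x_{(p,i)}` such that
lowering `φ` at `p` to `i` gives an isotone map.
-/

open MvPolynomial Function

namespace MvPolynomial

variable {σ R : Type*} [CommSemiring R]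

theorem colon_span_monomial_image_eq_span_X_image {S : Set (σ →₀ ℕ)} {a : σ →₀ ℕ} {V : Set σ}
    (hV : ∀ v ∈ V, ∃ s ∈ S, s ≤ Finsupp.single v 1 + a)
    (hS : ∀ s ∈ S, ∃ v ∈ V, a v < s v) :
    (Ideal.span ((fun s => monomial s (1 : R)) '' S)).colon (Ideal.span {monomial a (1 : R)}) =
      Ideal.span (X '' V) := by
  refine le_antisymm (fun f hf => ?_) (Ideal.span_le.2 ?_)
  · rw [Ideal.mem_colon_span_singleton, mem_ideal_span_monomial_image] at hf
    rw [mem_ideal_span_X_image]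
    intro d hd
    obtain ⟨s, hs, hsle⟩ := hf (d + a) (by
      rwa [mem_support_iff, coeff_mul_monomial, mul_one, ← mem_support_iff])
    obtain ⟨v, hv, hlt⟩ := hS s hs
    have := hsle v
    rw [Finsupp.add_apply] at this
    exact ⟨v, hv, by omega⟩
  · rintro _ ⟨v, hv, rfl⟩
    obtain ⟨s, hs, hsle⟩ := hV v hv
    rw [SetLike.mem_coe, Ideal.mem_colon_span_singleton, X, monomial_mul, one_mul,
      mem_ideal_span_monomial_image]
    intro d hd
    rw [Finset.mem_singleton.1 (support_monomial_subset hd)]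
    exact ⟨s, hs, hsle⟩

end MvPolynomial

/-- The exponent vector of `m_{Γψ} = ∏ a, x_{(a, ψ a)}`. -/
noncomputable def graphExponent {α β : Type*} [Fintype α] (ψ : α → β) : α × β →₀ ℕ :=
  ∑ a, Finsupp.single (a, ψ a) 1

section graphExponent

variable {α β : Type*} [Fintype α]

theorem graphExponent_apply [DecidableEq β] (ψ : α → β) (a : α) (b : β) :
    graphExponent ψ (a, b) = if ψ a = b then 1 else 0 := by
  classical
  rw [graphExponent, Finsupp.finsetSum_apply, Finset.sum_eq_single a]
  · simp [Finsupp.single_apply]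
  · intro c _ hc
    simp [hc]
  · simp

theorem prod_X_eq_monomial_graphExponent {R : Type*} [CommSemiring R] (ψ : α → β) :
    ∏ a, (X (a, ψ a) : MvPolynomial (α × β) R) = monomial (graphExponent ψ) 1 := by
  rw [graphExponent, monomial_sum_one]
  rfl

theorem graphExponent_update_le [DecidableEq α] (ψ : α → β) (a : α) (b : β) :
    graphExponent (update ψ a b) ≤ Finsupp.single (a, b) 1 + graphExponent ψ := by
  classical
  rintro ⟨c, d⟩
  rw [Finsupp.add_apply, graphExponent_apply, graphExponent_apply, Finsupp.single_apply,
    update_apply]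
  split_ifs <;> simp_all

end graphExponent

theorem Monotone.exists_lt_monotone_update {α β : Type*} [PartialOrder α] [WellFoundedLT α]
    [LinearOrder β] [DecidableEq α] {φ ψ : α → β} (hφ : Monotone φ) (hψ : Monotone ψ)
    (h : ¬ φ ≤ ψ) : ∃ p, ψ p < φ p ∧ Monotone (update φ p (ψ p)) := by
  have hne : {q | ψ q < φ q}.Nonempty := by
    simpa [Pi.le_def, Set.Nonempty] using h
  obtain ⟨p, hp, hmin⟩ := wellFounded_lt.has_min _ hne
  refine ⟨p, hp, fun a b hab => ?_⟩
  rcases eq_or_ne a p with ha | ha <;> rcases eq_or_ne b p with hb | hb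
  · simp [ha, hb]
  · simpa [ha, hb] using hp.le.trans (hφ (ha ▸ hab))
  · have hlow : φ a ≤ ψ a := not_lt.1 fun hlt => hmin a hlt (lt_of_le_of_ne (hb ▸ hab) ha)
    simpa [ha, hb] using hlow.trans (hψ hab)
  · simpa [ha, hb] using hφ hab

theorem coletterplace_poset_ideal_linear_quotients_general
    (k : Type*) [Field k]
    {P : Type*} [PartialOrder P] [Fintype P]
    (n : ℕ)
    (𝒥 : Set (P → Fin n))
    (h𝒥mono : ∀ φ ∈ 𝒥, Monotone φ)
    (h𝒥down : ∀ φ ∈ 𝒥, ∀ ψ : P → Fin n, Monotone ψ → (∀ p, ψ p ≤ φ p) → ψ ∈ 𝒥)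
    (t : (P → Fin n) → (P → Fin n) → Prop)
    (htantisymm : ∀ φ ∈ 𝒥, ∀ ψ ∈ 𝒥, t φ ψ → t ψ φ → φ = ψ)
    (hext : ∀ φ ∈ 𝒥, ∀ ψ ∈ 𝒥, (∀ p, φ p ≤ ψ p) → t φ ψ)
    (φ : P → Fin n) (hφ : φ ∈ 𝒥) :
    ∃ V : Set (P × Fin n),
      (Ideal.span ((fun ψ : P → Fin n => ∏ p : P, X (p, ψ p)) ''
          {ψ | ψ ∈ 𝒥 ∧ t ψ φ ∧ ψ ≠ φ})).colon
        (Ideal.span {∏ p : P, (X (p, φ p) : MvPolynomial (P × Fin n) k)})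
      = Ideal.span ((fun v : P × Fin n => (X v : MvPolynomial (P × Fin n) k)) '' V) := by
  classical
  refine ⟨{v | v.2 < φ v.1 ∧ Monotone (update φ v.1 v.2)}, ?_⟩
  simp_rw [prod_X_eq_monomial_graphExponent]
  rw [← Set.image_image (fun s => monomial s (1 : k)) graphExponent]
  apply MvPolynomial.colon_span_monomial_image_eq_span_X_image
  · rintro ⟨p, i⟩ ⟨hlt, hmono⟩
    have hle : update φ p i ≤ φ := update_le_iff.2 ⟨hlt.le, fun _ _ => le_rfl⟩
    have hmem := h𝒥down φ hφ _ hmono hle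
    have hne : update φ p i ≠ φ := fun h => hlt.ne (by simpa using congrFun h p)
    exact ⟨_, ⟨_, ⟨hmem, hext _ hmem _ hφ hle, hne⟩, rfl⟩, graphExponent_update_le φ p i⟩
  · rintro _ ⟨ψ, ⟨hψ, htψ, hne⟩, rfl⟩
    have hnle : ¬ φ ≤ ψ := fun hle => hne (htantisymm ψ hψ φ hφ htψ (hext φ hφ ψ hψ hle))
    obtain ⟨p, hlt, hmono⟩ := (h𝒥mono φ hφ).exists_lt_monotone_update (h𝒥mono ψ hψ) hnle
    exact ⟨(p, ψ p), ⟨hlt, hmono⟩, by simp [graphExponent_apply, hlt.ne']⟩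

/-- For a poset ideal `𝒥` of `Hom(P,[n])`, the co-letterplace ideal `L(𝒥)` has linear
quotients with respect to any total order extending the pointwise partial order:
each colon ideal `(m_{Γψ} : ψ <ᵗ φ) : m_{Γφ}` is generated by variables. -/
theorem coletterplace_poset_ideal_linear_quotients
    (k : Type*) [Field k]
    {P : Type*} [PartialOrder P] [Fintype P]
    (n : ℕ) (hn : 1 ≤ n)
    (𝒥 : Set (P → Fin n))
    (h𝒥mono : ∀ φ ∈ 𝒥, Monotone φ)
    (h𝒥down : ∀ φ ∈ 𝒥, ∀ ψ : P → Fin n, Monotone ψ → (∀ p, ψ p ≤ φ p) → ψ ∈ 𝒥)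
    (t : (P → Fin n) → (P → Fin n) → Prop)
    (htrefl : ∀ φ ∈ 𝒥, t φ φ)
    (htantisymm : ∀ φ ∈ 𝒥, ∀ ψ ∈ 𝒥, t φ ψ → t ψ φ → φ = ψ)
    (httrans : ∀ φ ∈ 𝒥, ∀ ψ ∈ 𝒥, ∀ χ ∈ 𝒥, t φ ψ → t ψ χ → t φ χ)
    (httotal : ∀ φ ∈ 𝒥, ∀ ψ ∈ 𝒥, t φ ψ ∨ t ψ φ)
    (hext : ∀ φ ∈ 𝒥, ∀ ψ ∈ 𝒥, (∀ p, φ p ≤ ψ p) → t φ ψ)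
    (φ : P → Fin n) (hφ : φ ∈ 𝒥) :
    ∃ V : Set (P × Fin n),
      (Ideal.span ((fun ψ : P → Fin n => ∏ p : P, X (p, ψ p)) ''
          {ψ | ψ ∈ 𝒥 ∧ t ψ φ ∧ ψ ≠ φ})).colon
        (Ideal.span {∏ p : P, (X (p, φ p) : MvPolynomial (P × Fin n) k)})
      = Ideal.span ((fun v : P × Fin n => (X v : MvPolynomial (P × Fin n) k)) '' V) :=
  coletterplace_poset_ideal_linear_quotients_general k n 𝒥 h𝒥mono h𝒥down t htantisymm hext φ hφ
end

section
/- Let P be a finite poset, n ≥ 1, and 𝒥 a poset ideal of Hom(P,[n]). If φ ∈ 𝒥 and ψ ∈ Hom(P,[n]) ∖ 𝒥, then Λψ ∩ Γφ is nonempty. -/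
/-! The point of `Γφ` in `Λψ` sits over a minimal element `p` of `{p | φ p < ψ p}`, which is nonempty
since otherwise `ψ ≤ φ` would put `ψ` in the ideal: below `p` we have `ψ ≤ φ`, and `φ` is monotone. -/

theorem Monotone.exists_lt_and_forall_lt_le_of_not_le {P α : Type*} [PartialOrder P]
    [WellFoundedLT P] [LinearOrder α] {φ ψ : P → α} (hφ : Monotone φ) (h : ¬ ψ ≤ φ) :
    ∃ p, φ p < ψ p ∧ ∀ q < p, ψ q ≤ φ p := by
  have hne : {p | φ p < ψ p}.Nonempty := by
    simpa [Pi.le_def, Set.Nonempty] using h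
  obtain ⟨p, hp, hmin⟩ := wellFounded_lt.has_min _ hne
  refine ⟨p, hp, fun q hq => ?_⟩
  have hq' : ψ q ≤ φ q := not_lt.mp fun hlt => hmin q hlt hq
  exact hq'.trans (hφ hq.le)

theorem lambda_meets_graph_general
    {P : Type*} [PartialOrder P] [Fintype P]
    (n : ℕ)
    (𝒥 : Set (P → Fin n))
    (h𝒥mono : ∀ φ ∈ 𝒥, Monotone φ)
    (h𝒥down : ∀ φ ∈ 𝒥, ∀ ψ : P → Fin n, Monotone ψ → (∀ p, ψ p ≤ φ p) → ψ ∈ 𝒥)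
    (φ : P → Fin n) (hφ : φ ∈ 𝒥)
    (ψ : P → Fin n) (hψmono : Monotone ψ) (hψ : ψ ∉ 𝒥) :
    ({v : P × Fin n | v.2 < ψ v.1 ∧ ∀ q : P, q < v.1 → ψ q ≤ v.2} ∩
      {v : P × Fin n | v.2 = φ v.1}).Nonempty := by
  have hψφ : ¬ ψ ≤ φ := fun hle => hψ (h𝒥down φ hφ ψ hψmono hle)
  obtain ⟨p, hp, hbelow⟩ := (h𝒥mono φ hφ).exists_lt_and_forall_lt_le_of_not_le hψφ
  exact ⟨(p, φ p), ⟨hp, hbelow⟩, rfl⟩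

/-- If `𝒥` is a poset ideal of `Hom(P,[n])`, `φ ∈ 𝒥` and `ψ ∈ Hom(P,[n]) ∖ 𝒥`,
then `Λψ ∩ Γφ` is nonempty. -/
theorem lambda_meets_graph
    {P : Type*} [PartialOrder P] [Fintype P]
    (n : ℕ) (hn : 1 ≤ n)
    (𝒥 : Set (P → Fin n))
    (h𝒥mono : ∀ φ ∈ 𝒥, Monotone φ)
    (h𝒥down : ∀ φ ∈ 𝒥, ∀ ψ : P → Fin n, Monotone ψ → (∀ p, ψ p ≤ φ p) → ψ ∈ 𝒥)
    (φ : P → Fin n) (hφ : φ ∈ 𝒥)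
    (ψ : P → Fin n) (hψmono : Monotone ψ) (hψ : ψ ∉ 𝒥) :
    ({v : P × Fin n | v.2 < ψ v.1 ∧ ∀ q : P, q < v.1 → ψ q ≤ v.2} ∩
      {v : P × Fin n | v.2 = φ v.1}).Nonempty :=
  lambda_meets_graph_general n 𝒥 h𝒥mono h𝒥down φ hφ ψ hψmono hψ
end

section
/- Let P be a finite poset, n ≥ 1, and S a subset of P×[n]. Suppose φ ∈ Hom(P,[n]) satisfies S ∩ Γφ = ∅ and φ is minimal with this property in the pointwise partial order on Hom(P,[n]) (i.e. there is no isotone ψ < φ with S ∩ Γψ = ∅). Then S ⊇ Λφ. -/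
/-- If `S ⊆ P × [n]` is disjoint from `Γφ` and `φ` is minimal (in the pointwise order
on `Hom(P,[n])`) with this property, then `S ⊇ Λφ`. -/
theorem lambda_subset_of_minimal_disjoint
    {P : Type*} [PartialOrder P] [Fintype P]
    (n : ℕ) (hn : 1 ≤ n)
    (S : Set (P × Fin n))
    (φ : P → Fin n) (hφmono : Monotone φ)
    (hdisj : ∀ p : P, (p, φ p) ∉ S)
    (hmin : ∀ ψ : P → Fin n, Monotone ψ → (∀ p, ψ p ≤ φ p) → ψ ≠ φ →
      ∃ p : P, (p, ψ p) ∈ S) :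
    {v : P × Fin n | v.2 < φ v.1 ∧ ∀ q : P, q < v.1 → φ q ≤ v.2} ⊆ S := by
  classical
  rintro ⟨p, i⟩ ⟨h1, h2⟩
  by_contra hS
  set ψ : P → Fin n := fun x => if x = p then i else φ x with hψ
  have hψmono : Monotone ψ := by
    intro a b hab
    rcases eq_or_lt_of_le hab with rfl | hlt
    · exact le_refl _
    · simp only [hψ]
      by_cases ha : a = p
      · by_cases hb : b = p
        · simp [ha, hb]
        · simp only [if_pos ha, if_neg hb]
          have hpb : φ p ≤ φ b := by rw [← ha]; exact hφmono hab
          exact (lt_of_lt_of_le h1 hpb).le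
      · by_cases hb : b = p
        · simp only [if_neg ha, if_pos hb]
          exact h2 a (hb ▸ hlt)
        · simpa [ha, hb] using hφmono hab
  have hle : ∀ x, ψ x ≤ φ x := by
    intro x
    by_cases hx : x = p
    · subst hx; simp [hψ, le_of_lt h1]
    · simp [hψ, hx]
  have hne : ψ ≠ φ := by
    intro h
    have : ψ p = φ p := congrFun h p
    simp only [hψ, if_pos rfl] at this
    exact absurd this (ne_of_lt h1)
  obtain ⟨q, hq⟩ := hmin ψ hψmono hle hne
  by_cases hqp : q = p
  · subst hqp; simp only [hψ, if_pos rfl] at hq; exact hS hq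
  · simp only [hψ, if_neg hqp] at hq; exact hdisj q hq
end

section
/- Let P be a finite poset, n ≥ 1, and 𝒥 a poset ideal of Hom(P,[n]). Then the Alexander dual of L(𝒥) is L(n,P) + K(𝒥^c) in k[x_{[n]×P}]: a monomial m of k[x_{[n]×P}] has a nontrivial common divisor with m_{(Γφ)^τ} for every φ ∈ 𝒥 if and only if m ∈ L(n,P) + K(𝒥^c), where 𝒥^c = Hom(P,[n]) ∖ 𝒥. -/
/-!
A monomial with exponent support `S ⊆ [n] × P` lies in the monomial ideal `L(n,P) + K(𝒥ᶜ)`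
iff `S` contains the graph of an isotone chain `c : [n] → P` or the set `(Λψ)^τ` for some isotone
`ψ ∉ 𝒥`. Each of these forces every `φ ∈ 𝒥` to meet `S`: the isotone self-map `φ ∘ c` of `[n]`
has a fixed point `i`, so `(φ (c i), c i) = (i, c i) ∈ S`; and since `𝒥` is downward closed,
`ψ ≰ φ`, and a minimal `p` with `φ p < ψ p` gives `(φ p, p) ∈ (Λψ)^τ`.

Conversely, if `S` contains no chain, let `φ p` be the length of the longest chain
`c₀ ≤ ⋯ ≤ c_{m-1} ≤ p` with all `(i, cᵢ) ∈ S`. This `φ` is isotone, its graph avoids `S`, and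
`(Λφ)^τ ⊆ S`; so either `φ ∉ 𝒥` and `S ⊇ (Λφ)^τ`, or `φ ∈ 𝒥` does not meet `S`.
-/

open MvPolynomial

theorem Finsupp.sum_single_one_le_iff_s14 {σ : Type*} (s : Finset σ) (d : σ →₀ ℕ) :
    ∑ v ∈ s, Finsupp.single v 1 ≤ d ↔ s ⊆ d.support := by
  classical
  simp only [Finsupp.le_def, Finsupp.finsetSum_apply, Finsupp.single_apply, Finset.sum_ite_eq']
  refine ⟨fun h v hv => ?_, fun h v => ?_⟩
  · simpa [hv, Nat.one_le_iff_ne_zero] using h v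
  · split_ifs with hv
    · exact Nat.one_le_iff_ne_zero.2 (Finsupp.mem_support_iff.1 (h hv))
    · exact Nat.zero_le _

theorem Finset.prod_image_graph {ι β M : Type*} [CommMonoid M] [DecidableEq (ι × β)]
    (s : Finset ι) (c : ι → β) (f : ι × β → M) :
    ∏ v ∈ s.image (fun i => (i, c i)), f v = ∏ i ∈ s, f (i, c i) :=
  Finset.prod_image fun _ _ _ _ h => congrArg Prod.fst h

namespace MvPolynomial

variable {σ R : Type*} [CommSemiring R]

theorem prod_X_eq_monomial_sum_single (s : Finset σ) :
    ∏ v ∈ s, (X v : MvPolynomial σ R) = monomial (∑ v ∈ s, Finsupp.single v 1) 1 := by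
  rw [monomial_sum_one]
  rfl

theorem monomial_mem_span_prod_X_iff [Nontrivial R] {F : Set (Finset σ)} {d : σ →₀ ℕ} :
    monomial d (1 : R) ∈ Ideal.span ((fun s => ∏ v ∈ s, X v) '' F) ↔ ∃ s ∈ F, s ⊆ d.support := by
  classical
  have hF : (fun s : Finset σ => ∏ v ∈ s, (X v : MvPolynomial σ R)) '' F =
      (fun e => monomial e 1) '' ((fun s => ∑ v ∈ s, Finsupp.single v 1) '' F) := by
    simp only [Set.image_image, prod_X_eq_monomial_sum_single]
  rw [hF, mem_ideal_span_monomial_image, support_monomial, if_neg one_ne_zero]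
  simp [Finsupp.sum_single_one_le_iff_s14]

end MvPolynomial

section Letterplace

variable {n : ℕ} {P : Type*} [PartialOrder P]

/-- The set `(Λφ)^τ ⊆ [n] × P`. -/
def transposedLambda (φ : P → Fin n) : Set (Fin n × P) :=
  {v | v.1 < φ v.2 ∧ ∀ q < v.2, φ q ≤ v.1}

def HasChainBelow (S : Set (Fin n × P)) (p : P) (m : ℕ) : Prop :=
  ∃ c : Fin n → P, Monotone c ∧ ∀ i : Fin n, (i : ℕ) < m → (i, c i) ∈ S ∧ c i ≤ p

namespace HasChainBelow

variable {S : Set (Fin n × P)} {p q : P} {m : ℕ}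

theorem zero (S : Set (Fin n × P)) (p : P) : HasChainBelow S p 0 :=
  ⟨fun _ => p, monotone_const, fun _ hi => absurd hi (Nat.not_lt_zero _)⟩

theorem mono (h : HasChainBelow S p m) (hpq : p ≤ q) : HasChainBelow S q m :=
  let ⟨c, hc, hcS⟩ := h
  ⟨c, hc, fun i hi => ⟨(hcS i hi).1, (hcS i hi).2.trans hpq⟩⟩

theorem snoc {i : Fin n} (h : HasChainBelow S p i) (hi : (i, p) ∈ S) :
    HasChainBelow S p (i + 1) := by
  obtain ⟨c, hc, hcS⟩ := h
  refine ⟨fun j => if j < i then c j else p, fun j k hjk => ?_, fun j hj => ?_⟩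
  · dsimp only
    split_ifs with hj hk hk
    · exact hc hjk
    · exact (hcS j hj).2
    · exact absurd (hjk.trans_lt hk) hj
    · exact le_rfl
  · rcases lt_or_eq_of_le (Nat.lt_succ_iff.1 hj) with hji | hji
    · simpa [Fin.lt_def, hji] using hcS j hji
    · obtain rfl := Fin.ext hji
      simpa using hi

end HasChainBelow

section chainHeight

open scoped Classical

noncomputable def chainHeight (S : Set (Fin n × P)) (p : P) : ℕ :=
  Nat.findGreatest (HasChainBelow S p) n

variable {S : Set (Fin n × P)} {p : P}

theorem hasChainBelow_chainHeight : HasChainBelow S p (chainHeight S p) :=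
  Nat.findGreatest_spec (Nat.zero_le n) (HasChainBelow.zero S p)

theorem le_chainHeight {m : ℕ} (h : HasChainBelow S p m) (hm : m ≤ n) : m ≤ chainHeight S p :=
  Nat.le_findGreatest hm h

theorem chainHeight_monotone (S : Set (Fin n × P)) : Monotone (chainHeight S) :=
  fun _ _ hpq => Nat.findGreatest_mono_left (fun _ h => h.mono hpq) n

theorem chainHeight_lt (hS : ¬∃ c : Fin n → P, Monotone c ∧ ∀ i, (i, c i) ∈ S) :
    chainHeight S p < n := by
  refine lt_of_le_of_ne (Nat.findGreatest_le n) fun h => hS ?_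
  obtain ⟨c, hc, hcS⟩ := h ▸ hasChainBelow_chainHeight (S := S) (p := p)
  exact ⟨c, hc, fun i => (hcS i i.isLt).1⟩

theorem not_hasChainBelow_chainHeight_succ
    (hS : ¬∃ c : Fin n → P, Monotone c ∧ ∀ i, (i, c i) ∈ S) :
    ¬HasChainBelow S p (chainHeight S p + 1) :=
  Nat.findGreatest_is_greatest (Nat.lt_succ_self _) (chainHeight_lt hS)

end chainHeight

theorem exists_monotone_graph_disjoint_transposedLambda_subset {S : Set (Fin n × P)}
    (hS : ¬∃ c : Fin n → P, Monotone c ∧ ∀ i, (i, c i) ∈ S) :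
    ∃ φ : P → Fin n, Monotone φ ∧ (∀ p, (φ p, p) ∉ S) ∧ transposedLambda φ ⊆ S := by
  refine ⟨fun p => ⟨chainHeight S p, chainHeight_lt hS⟩, fun p q hpq => chainHeight_monotone S hpq,
    fun p hp => not_hasChainBelow_chainHeight_succ hS (hasChainBelow_chainHeight.snoc hp), ?_⟩
  rintro ⟨i, p⟩ ⟨hip, hbelow⟩
  obtain ⟨c, hc, hcS⟩ := hasChainBelow_chainHeight (S := S) (p := p)
  obtain ⟨hciS, hcip⟩ := hcS i hip
  rcases hcip.lt_or_eq with hlt | rfl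
  · -- `c₀ ≤ ⋯ ≤ cᵢ` is a chain of length `i + 1` below `cᵢ < p`, contradicting `φ cᵢ ≤ i`
    have hchain : HasChainBelow S (c i) (i + 1) := ⟨c, hc, fun j hj =>
      ⟨(hcS j ((Nat.lt_succ_iff.1 hj).trans_lt hip)).1, hc (Fin.le_def.2 (Nat.lt_succ_iff.1 hj))⟩⟩
    have hheight := le_chainHeight hchain i.isLt
    have hbelow_ci := hbelow (c i) hlt
    simp only [Fin.le_def] at hbelow_ci
    omega
  · exact hciS

theorem exists_graph_mem_of_monotone_chain [NeZero n] {S : Set (Fin n × P)} {φ : P → Fin n}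
    (hφ : Monotone φ) {c : Fin n → P} (hc : Monotone c) (hcS : ∀ i, (i, c i) ∈ S) :
    ∃ p, (φ p, p) ∈ S := by
  let f : Fin n →o Fin n := ⟨φ ∘ c, hφ.comp hc⟩
  refine ⟨c f.lfp, ?_⟩
  rw [show φ (c f.lfp) = f.lfp from f.map_lfp]
  exact hcS f.lfp

theorem exists_graph_mem_transposedLambda_of_not_le [WellFoundedLT P] {φ ψ : P → Fin n}
    (hφ : Monotone φ) (hψφ : ¬ψ ≤ φ) : ∃ p, (φ p, p) ∈ transposedLambda ψ := by
  obtain ⟨p, hp, hmin⟩ := wellFounded_lt.has_min {p | φ p < ψ p}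
    (by simpa [Pi.le_def] using hψφ : ∃ p, φ p < ψ p)
  exact ⟨p, hp, fun q hq => (not_lt.1 fun h => hmin q h hq).trans (hφ hq.le)⟩

theorem forall_exists_graph_mem_iff [NeZero n] [WellFoundedLT P] {𝒥 : Set (P → Fin n)}
    (h𝒥mono : ∀ φ ∈ 𝒥, Monotone φ)
    (h𝒥down : ∀ φ ∈ 𝒥, ∀ ψ : P → Fin n, Monotone ψ → ψ ≤ φ → ψ ∈ 𝒥) (S : Set (Fin n × P)) :
    (∀ φ ∈ 𝒥, ∃ p, (φ p, p) ∈ S) ↔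
      (∃ c : Fin n → P, Monotone c ∧ ∀ i, (i, c i) ∈ S) ∨
        ∃ ψ : P → Fin n, (Monotone ψ ∧ ψ ∉ 𝒥) ∧ transposedLambda ψ ⊆ S := by
  constructor
  · intro h𝒥S
    by_contra hno
    rw [not_or] at hno
    obtain ⟨φ, hφ, hφS, hΛS⟩ := exists_monotone_graph_disjoint_transposedLambda_subset hno.1
    have hφ𝒥 : φ ∈ 𝒥 := by_contra fun h => hno.2 ⟨φ, ⟨hφ, h⟩, hΛS⟩
    obtain ⟨p, hp⟩ := h𝒥S φ hφ𝒥
    exact hφS p hp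
  · rintro (⟨c, hc, hcS⟩ | ⟨ψ, ⟨hψ, hψ𝒥⟩, hΛS⟩) φ hφ𝒥
    · exact exists_graph_mem_of_monotone_chain (h𝒥mono φ hφ𝒥) hc hcS
    · have hψφ : ¬ψ ≤ φ := fun h => hψ𝒥 (h𝒥down φ hφ𝒥 ψ hψ h)
      obtain ⟨p, hp⟩ := exists_graph_mem_transposedLambda_of_not_le (h𝒥mono φ hφ𝒥) hψφ
      exact ⟨p, hΛS hp⟩

theorem finprod_X_transposedLambda {k : Type*} [CommSemiring k] (φ : P → Fin n)
    [Fintype (transposedLambda φ)] :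
    ∏ᶠ (v : P × Fin n) (_ : v.2 < φ v.1 ∧ ∀ q : P, q < v.1 → φ q ≤ v.2),
      (X (v.2, v.1) : MvPolynomial (Fin n × P) k) = ∏ v ∈ (transposedLambda φ).toFinset, X v := by
  classical
  rw [finprod_cond_eq_prod_of_cond_iff _ (t := (transposedLambda φ).toFinset.image Prod.swap),
    Finset.prod_image Prod.swap_injective.injOn]
  · rfl
  · intro v _
    simp only [Finset.mem_image, Set.mem_toFinset, Prod.exists]
    exact ⟨fun h => ⟨v.2, v.1, h, rfl⟩, fun ⟨_, _, h, hv⟩ => hv ▸ h⟩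

end Letterplace

/-- For a poset ideal `𝒥` of `Hom(P,[n])`, the Alexander dual of `L(𝒥)` is
`L(n,P) + K(𝒥^c)`: a monomial of `k[x_{[n]×P}]` has a nontrivial common divisor with
`m_{(Γφ)^τ}` for every `φ ∈ 𝒥` iff it lies in `L(n,P) + K(𝒥^c)`. -/
theorem alexander_dual_of_coletterplace_poset_ideal
    (k : Type*) [Field k]
    {P : Type*} [PartialOrder P] [Fintype P]
    (n : ℕ) (hn : 1 ≤ n)
    (𝒥 : Set (P → Fin n))
    (h𝒥mono : ∀ φ ∈ 𝒥, Monotone φ)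
    (h𝒥down : ∀ φ ∈ 𝒥, ∀ ψ : P → Fin n, Monotone ψ → (∀ p, ψ p ≤ φ p) → ψ ∈ 𝒥)
    (LnP : Ideal (MvPolynomial (Fin n × P) k))
    (hLnP : LnP = Ideal.span
      { m | ∃ c : Fin n → P, Monotone c ∧ m = ∏ i : Fin n, X (i, c i) })
    (K𝒥c : Ideal (MvPolynomial (Fin n × P) k))
    (hK : K𝒥c = Ideal.span
      ((fun φ : P → Fin n => ∏ᶠ (v : P × Fin n)
          (_ : v.2 < φ v.1 ∧ ∀ q : P, q < v.1 → φ q ≤ v.2),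
            (X (v.2, v.1) : MvPolynomial (Fin n × P) k)) ''
        {φ : P → Fin n | Monotone φ ∧ φ ∉ 𝒥}))
    (d : Fin n × P →₀ ℕ) :
    (∀ φ ∈ 𝒥, ∃ p : P, (φ p, p) ∈ d.support) ↔
      monomial d (1 : k) ∈ LnP + K𝒥c := by
  classical
  have : NeZero n := ⟨Nat.one_le_iff_ne_zero.1 hn⟩
  have hLgen : {m | ∃ c : Fin n → P, Monotone c ∧ m = ∏ i : Fin n, X (i, c i)} =
      (fun s => ∏ v ∈ s, (X v : MvPolynomial (Fin n × P) k)) ''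
        ((fun c => Finset.univ.image fun i => (i, c i)) '' {c | Monotone c}) := by
    ext m
    simp [Finset.prod_image_graph, eq_comm]
  have hKgen : (fun φ : P → Fin n => ∏ᶠ (v : P × Fin n)
          (_ : v.2 < φ v.1 ∧ ∀ q : P, q < v.1 → φ q ≤ v.2),
            (X (v.2, v.1) : MvPolynomial (Fin n × P) k)) '' {φ | Monotone φ ∧ φ ∉ 𝒥} =
      (fun s => ∏ v ∈ s, X v) ''
        ((fun φ => (transposedLambda φ).toFinset) '' {φ | Monotone φ ∧ φ ∉ 𝒥}) := by
    simp only [Set.image_image, finprod_X_transposedLambda]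
  rw [hLnP, hK, hLgen, hKgen, Submodule.add_eq_sup, ← Ideal.span_union, ← Set.image_union,
    monomial_mem_span_prod_X_iff]
  refine (forall_exists_graph_mem_iff h𝒥mono h𝒥down (d.support : Set (Fin n × P))).trans ?_
  simp only [Set.mem_union, Set.mem_image, or_and_right, exists_or]
  simp [Finset.subset_iff, Set.subset_def]
end

section
/- Let S = k[x₀,x₁,…,x_n] be a polynomial ring over a field k and I ⊆ S a squarefree monomial ideal. If f ∈ S satisfies x₁f − x₀f ∈ I, then for every monomial m in the support of f one has x₁·m ∈ I and x₀·m ∈ I. -/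
open MvPolynomial

private lemma aux_chain {k : Type*} [Field k] {σ : Type*} [DecidableEq σ]
    {G : Set (σ →₀ ℕ)} (hGsq : ∀ d ∈ G, ∀ v, d v ≤ 1)
    {i j : σ} (hij : i ≠ j)
    {f : MvPolynomial σ k}
    (hsup : ∀ e ∈ (X i * f - X j * f).support, ∃ g ∈ G, g ≤ e) :
    ∀ N : ℕ, ∀ d : σ →₀ ℕ, d j ≤ N → coeff d f ≠ 0 →
      ∃ g ∈ G, g ≤ Finsupp.single i 1 + d := by
  intro N
  induction N with
  | zero =>
    intro d hdj hd
    refine hsup _ ?_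
    rw [mem_support_iff, coeff_sub, coeff_X_mul, coeff_X_mul' _ j]
    have hj : j ∉ (Finsupp.single i 1 + d).support := by
      simp [Finsupp.mem_support_iff, Finsupp.add_apply, Finsupp.single_apply, hij,
        Nat.le_zero.mp hdj]
    rw [if_neg hj]
    simpa using hd
  | succ N ih =>
    intro d hdj hd
    by_cases hzero : coeff (Finsupp.single i 1 + d) (X i * f - X j * f) = 0
    · -- cancellation case
      rw [coeff_sub, coeff_X_mul, sub_eq_zero] at hzero
      have hjpos : j ∈ (Finsupp.single i 1 + d).support := by
        by_contra hc
        rw [coeff_X_mul' _ j, if_neg hc] at hzero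
        exact hd hzero
      set d' := Finsupp.single i 1 + d - Finsupp.single j 1 with hd'
      have hdj0 : 0 < d j := by
        have h := Finsupp.mem_support_iff.mp hjpos
        rw [Finsupp.add_apply, Finsupp.single_apply, if_neg hij] at h
        omega
      have hd'j : d' j ≤ N := by
        rw [hd', Finsupp.tsub_apply, Finsupp.add_apply, Finsupp.single_apply,
          if_neg hij, Finsupp.single_eq_same]
        omega
      rw [coeff_X_mul' _ j, if_pos hjpos] at hzero
      obtain ⟨g, hgG, hg⟩ := ih d' hd'j (fun h => hd (hzero.trans h))
      refine ⟨g, hgG, ?_⟩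
      intro v
      have h1 := hGsq g hgG v
      have h2 := hg v
      rw [Finsupp.add_apply, Finsupp.tsub_apply, Finsupp.add_apply,
        Finsupp.single_apply, Finsupp.single_apply] at h2
      rw [Finsupp.add_apply, Finsupp.single_apply]
      by_cases hvi : i = v
      · rw [if_pos hvi] at h2 ⊢
        by_cases hvj : j = v
        · exact absurd (hvi.trans hvj.symm) hij
        · rw [if_neg hvj] at h2; omega
      · rw [if_neg hvi] at h2 ⊢
        by_cases hvj : j = v
        · rw [if_pos hvj] at h2; subst hvj; omega
        · rw [if_neg hvj] at h2; omega
    · exact hsup _ (mem_support_iff.mpr hzero)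

/-- If `I ⊆ k[x₀,…,x_n]` is a squarefree monomial ideal and `x₁f - x₀f ∈ I`, then for
every monomial `m` in the support of `f` one has `x₁·m ∈ I` and `x₀·m ∈ I`. -/
theorem squarefree_variable_difference_annihilates
    (k : Type*) [Field k] (n : ℕ) (hn : 1 ≤ n)
    (I : Ideal (MvPolynomial (Fin (n + 1)) k))
    (hIsqfree : ∃ G : Set (Fin (n + 1) →₀ ℕ), (∀ d ∈ G, ∀ v, d v ≤ 1) ∧
      I = Ideal.span ((fun d => monomial d (1 : k)) '' G))
    (f : MvPolynomial (Fin (n + 1)) k)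
    (hf : X 1 * f - X 0 * f ∈ I) :
    ∀ d ∈ f.support,
      X 1 * monomial d (1 : k) ∈ I ∧ X 0 * monomial d (1 : k) ∈ I := by
  classical
  obtain ⟨G, hGsq, rfl⟩ := hIsqfree
  have h01 : (0 : Fin (n + 1)) ≠ 1 := by
    intro h
    have h2 := congrArg Fin.val h
    rw [Fin.val_zero, Fin.val_one'] at h2
    rw [Nat.mod_eq_of_lt (by omega)] at h2
    exact absurd h2 (by omega)
  have hsup1 : ∀ e ∈ (X (1 : Fin (n+1)) * f - X 0 * f).support, ∃ g ∈ G, g ≤ e :=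
    fun e he => mem_ideal_span_monomial_image.mp hf e he
  have hf' : X (0 : Fin (n+1)) * f - X 1 * f ∈
      Ideal.span ((fun d => monomial d (1 : k)) '' G) := by
    have h3 : X (0 : Fin (n+1)) * f - X 1 * f = -(X 1 * f - X 0 * f) := by ring
    rw [h3]
    exact neg_mem hf
  have hsup0 : ∀ e ∈ (X (0 : Fin (n+1)) * f - X 1 * f).support, ∃ g ∈ G, g ≤ e :=
    fun e he => mem_ideal_span_monomial_image.mp hf' e he
  intro d hd
  rw [mem_support_iff] at hd
  constructor
  · rw [X, monomial_mul, one_mul, mem_ideal_span_monomial_image]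
    intro xi hxi
    rw [support_monomial, if_neg (one_ne_zero)] at hxi
    rw [Finset.mem_singleton] at hxi
    subst hxi
    exact aux_chain hGsq h01.symm hsup1 (d 0) d le_rfl hd
  · rw [X, monomial_mul, one_mul, mem_ideal_span_monomial_image]
    intro xi hxi
    rw [support_monomial, if_neg (one_ne_zero)] at hxi
    rw [Finset.mem_singleton] at hxi
    subst hxi
    exact aux_chain hGsq h01 hsup0 (d 1) d le_rfl hd
end

section
/- Let S = k[x₀,x₁,x₂,…,x_n], let I ⊆ S be a squarefree monomial ideal, and let J ⊆ S be its Alexander dual. Let S₁ = k[x,x₂,…,x_n] and π : S → S₁ the ring map with x₀,x₁ ↦ x and x_i ↦ x_i for i ≥ 2, and let J₁ ⊆ S₁ be the ideal generated by π(J). If x₁ − x₀ is a regular element (nonzerodivisor) on S/I, then J₁ is a squarefree monomial ideal. -/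
/-!
A monomial `x^d` lies in `J` iff the support of `d` is a transversal of the generators of `I`, and
`π(x^d)` is divisible by a squarefree monomial of `J₁` as soon as some transversal `D ⊆ supp d`
avoids `0` or `1`, since `π` is injective on such a `D`. Regularity of `x₁ - x₀` lets one remove
`0` or `1` from any transversal `D`: otherwise there are generators `e₀`, `e₁` meeting `D` only in
`0`, resp. `1`, and for the part `x^m` of `x^(e₀ + e₁)` outside `D` both `x₀ x^m` and `x₁ x^m`
lie in `I`, so `x^m ∈ I`, although `x^m` avoids the transversal `D`.
-/

open MvPolynomial

section

variable {σ τ R : Type*}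

theorem Multiset.toFinsupp_val_support [DecidableEq σ] (D : Finset σ) :
    (Multiset.toFinsupp D.1).support = D := by
  simp [Multiset.toFinsupp_support]

theorem Multiset.toFinsupp_val_apply_le_one [DecidableEq σ] (D : Finset σ) (v : σ) :
    Multiset.toFinsupp D.1 v ≤ 1 :=
  Multiset.nodup_iff_count_le_one.1 D.nodup v

theorem Multiset.toFinsupp_val_le_of_subset_support [DecidableEq σ] {D : Finset σ}
    {d : σ →₀ ℕ} (h : D ⊆ d.support) : Multiset.toFinsupp D.1 ≤ d := by
  intro v
  by_cases hv : v ∈ D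
  · simpa [Multiset.count_eq_one_of_mem D.nodup hv, Nat.one_le_iff_ne_zero] using h hv
  · simp [Multiset.count_eq_zero_of_notMem hv]

theorem Finsupp.mapDomain_toFinsupp_val_of_injOn [DecidableEq σ] [DecidableEq τ] {g : σ → τ}
    {D : Finset σ} (h : Set.InjOn g D) :
    Finsupp.mapDomain g (Multiset.toFinsupp D.1) = Multiset.toFinsupp (D.image g).1 := by
  rw [Finset.image_val_of_injOn h, eq_comm, Multiset.toFinsupp_eq_iff, ← Finsupp.toMultiset_map,
    Multiset.toFinsupp_toMultiset]

theorem Finsupp.le_single_add_filter_notMem [DecidableEq σ] {D : Finset σ} {a : σ}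
    {e f : σ →₀ ℕ} (hea : e a ≤ 1) (heD : ∀ v ∈ D.erase a, v ∉ e.support) (hef : e ≤ f) :
    e ≤ Finsupp.single a 1 + f.filter (· ∉ D) := by
  intro v
  by_cases hv : v = a
  · subst hv
    simpa using hea.trans (Nat.le_add_right 1 _)
  by_cases hvD : v ∈ D
  · have hev : e v = 0 := by simpa using heD v (Finset.mem_erase.2 ⟨hv, hvD⟩)
    simp [hev]
  · simpa [Finsupp.single_apply, Ne.symm hv, hvD] using hef v

namespace MvPolynomial

theorem monomial_one_mem_span_monomial_image_iff [CommSemiring R] [Nontrivial R]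
    {G : Set (σ →₀ ℕ)} {d : σ →₀ ℕ} :
    monomial d (1 : R) ∈ Ideal.span ((fun e => monomial e (1 : R)) '' G) ↔ ∃ e ∈ G, e ≤ d := by
  classical
  rw [mem_ideal_span_monomial_image, support_monomial, if_neg one_ne_zero]
  simp

theorem span_monomial_image_eq_of_exists_le [CommSemiring R] {A B : Set (σ →₀ ℕ)}
    (hBA : B ⊆ A) (hA : ∀ a ∈ A, ∃ b ∈ B, b ≤ a) :
    Ideal.span ((fun d => monomial d (1 : R)) '' A) =
      Ideal.span ((fun d => monomial d (1 : R)) '' B) := by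
  refine le_antisymm (Ideal.span_le.2 ?_) (Ideal.span_mono (Set.image_mono hBA))
  rintro _ ⟨a, ha, rfl⟩
  refine mem_ideal_span_monomial_image.2 fun xi hxi => ?_
  rw [Finset.mem_singleton.1 (support_monomial_subset hxi)]
  exact hA a ha

theorem map_rename_span_monomial_image [CommSemiring R] (g : σ → τ) (A : Set (σ →₀ ℕ)) :
    Ideal.map (rename g) (Ideal.span ((fun d => monomial d (1 : R)) '' A)) =
      Ideal.span ((fun d => monomial d (1 : R)) '' (Finsupp.mapDomain g '' A)) := by
  simp only [Ideal.map_span, Set.image_image, rename_monomial]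

end MvPolynomial

def IsTransversal (G : Set (σ →₀ ℕ)) (D : Finset σ) : Prop :=
  ∀ e ∈ G, ∃ v ∈ D, v ∈ e.support

namespace IsTransversal

variable {G : Set (σ →₀ ℕ)} {D : Finset σ}

theorem exists_mem_support_of_monomial_mem [CommSemiring R] [Nontrivial R]
    (hD : IsTransversal G D) {m : σ →₀ ℕ}
    (hm : monomial m (1 : R) ∈ Ideal.span ((fun e => monomial e (1 : R)) '' G)) :
    ∃ v ∈ D, v ∈ m.support := by
  obtain ⟨e, he, hem⟩ := monomial_one_mem_span_monomial_image_iff.1 hm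
  obtain ⟨v, hvD, hve⟩ := hD e he
  exact ⟨v, hvD, Finsupp.support_mono hem hve⟩

theorem erase_or_erase [CommRing R] [Nontrivial R] [DecidableEq σ] {a b : σ}
    (ha : ∀ e ∈ G, e a ≤ 1) (hb : ∀ e ∈ G, e b ≤ 1)
    (hreg : ∀ f : MvPolynomial σ R, (X b - X a) * f ∈ Ideal.span ((fun e => monomial e 1) '' G) →
      f ∈ Ideal.span ((fun e => monomial e 1) '' G))
    (hD : IsTransversal G D) : IsTransversal G (D.erase a) ∨ IsTransversal G (D.erase b) := by
  by_contra! h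
  obtain ⟨e₀, he₀, h₀⟩ : ∃ e ∈ G, ∀ v ∈ D.erase a, v ∉ e.support := by
    simpa [IsTransversal] using h.1
  obtain ⟨e₁, he₁, h₁⟩ : ∃ e ∈ G, ∀ v ∈ D.erase b, v ∉ e.support := by
    simpa [IsTransversal] using h.2
  set m := (e₀ + e₁).filter (· ∉ D)
  have hX_mul : ∀ c, X c * monomial m (1 : R) = monomial (Finsupp.single c 1 + m) 1 := fun c => by
    rw [X, monomial_mul, one_mul]
  have hm_a : X a * monomial m (1 : R) ∈ Ideal.span ((fun e => monomial e 1) '' G) := by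
    rw [hX_mul, monomial_one_mem_span_monomial_image_iff]
    exact ⟨e₀, he₀, Finsupp.le_single_add_filter_notMem (ha e₀ he₀) h₀ le_self_add⟩
  have hm_b : X b * monomial m (1 : R) ∈ Ideal.span ((fun e => monomial e 1) '' G) := by
    rw [hX_mul, monomial_one_mem_span_monomial_image_iff]
    exact ⟨e₁, he₁, Finsupp.le_single_add_filter_notMem (hb e₁ he₁) h₁ le_add_self⟩
  have hm : (X b - X a) * monomial m (1 : R) ∈ Ideal.span ((fun e => monomial e 1) '' G) := by
    rw [sub_mul]
    exact sub_mem hm_b hm_a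
  obtain ⟨v, hvD, hvm⟩ := hD.exists_mem_support_of_monomial_mem (hreg _ hm)
  exact (Finsupp.mem_support_iff.1 hvm) (Finsupp.filter_apply_neg _ _ (not_not.2 hvD))

theorem exists_subset_notMem_or_notMem [CommRing R] [Nontrivial R] [DecidableEq σ] {a b : σ}
    (ha : ∀ e ∈ G, e a ≤ 1) (hb : ∀ e ∈ G, e b ≤ 1)
    (hreg : ∀ f : MvPolynomial σ R, (X b - X a) * f ∈ Ideal.span ((fun e => monomial e 1) '' G) →
      f ∈ Ideal.span ((fun e => monomial e 1) '' G))
    (hD : IsTransversal G D) : ∃ D' ⊆ D, IsTransversal G D' ∧ (a ∉ D' ∨ b ∉ D') := by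
  rcases hD.erase_or_erase ha hb hreg with h | h
  · exact ⟨D.erase a, D.erase_subset a, h, Or.inl (D.notMem_erase a)⟩
  · exact ⟨D.erase b, D.erase_subset b, h, Or.inr (D.notMem_erase b)⟩

end IsTransversal

theorem isTransversal_support_iff [CommSemiring R] [Nontrivial R] {G : Set (σ →₀ ℕ)}
    {d : σ →₀ ℕ} :
    (∀ e : σ →₀ ℕ, monomial e (1 : R) ∈ Ideal.span ((fun e => monomial e (1 : R)) '' G) →
      ∃ v, v ∈ d.support ∧ v ∈ e.support) ↔ IsTransversal G d.support := by
  refine ⟨fun h e he => ?_, fun hD e he => ?_⟩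
  · simpa using h e (Ideal.subset_span ⟨e, he, rfl⟩)
  · simpa using hD.exists_mem_support_of_monomial_mem (R := R) he

end

theorem injOn_of_notMem_zero_or_notMem_one {n : ℕ} {g : Fin (n + 1) → Fin n}
    (hg : ∀ i : Fin (n + 1), (g i : ℕ) = if (i : ℕ) ≤ 1 then 0 else (i : ℕ) - 1)
    {D : Set (Fin (n + 1))} (hD : 0 ∉ D ∨ 1 ∉ D) : Set.InjOn g D := by
  obtain ⟨n, rfl⟩ := Nat.exists_eq_add_one_of_ne_zero (g 0).pos.ne'
  intro i hi j hj hij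
  have hval := congrArg Fin.val hij
  rw [hg, hg] at hval
  by_contra hne
  have hij' : (i : ℕ) ≠ j := Fin.val_ne_of_ne hne
  have : ((i : ℕ) = 0 ∧ (j : ℕ) = 1) ∨ ((i : ℕ) = 1 ∧ (j : ℕ) = 0) := by
    split_ifs at hval <;> omega
  rcases this with ⟨hi0, hj1⟩ | ⟨hi1, hj0⟩
  · obtain rfl : i = 0 := Fin.ext hi0
    obtain rfl : j = 1 := Fin.ext hj1
    tauto
  · obtain rfl : i = 1 := Fin.ext hi1
    obtain rfl : j = 0 := Fin.ext hj0
    tauto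

theorem alexander_dual_image_squarefree_general
    (k : Type*) [Field k] (n : ℕ)
    (I : Ideal (MvPolynomial (Fin (n + 1)) k))
    (hIsqfree : ∃ G : Set (Fin (n + 1) →₀ ℕ), (∀ d ∈ G, ∀ v, d v ≤ 1) ∧
      I = Ideal.span ((fun d => monomial d (1 : k)) '' G))
    (J : Ideal (MvPolynomial (Fin (n + 1)) k))
    (hJ : J = Ideal.span { m : MvPolynomial (Fin (n + 1)) k |
      ∃ d : Fin (n + 1) →₀ ℕ,
        (∀ e : Fin (n + 1) →₀ ℕ, monomial e (1 : k) ∈ I →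
          ∃ v, v ∈ d.support ∧ v ∈ e.support) ∧
        m = monomial d (1 : k) })
    (g : Fin (n + 1) → Fin n)
    (hg : ∀ i : Fin (n + 1), (g i : ℕ) = if (i : ℕ) ≤ 1 then 0 else (i : ℕ) - 1)
    (hreg : ∀ f : MvPolynomial (Fin (n + 1)) k, (X 1 - X 0) * f ∈ I → f ∈ I) :
    ∃ G₁ : Set (Fin n →₀ ℕ), (∀ d ∈ G₁, ∀ v, d v ≤ 1) ∧
      Ideal.map (rename g) J = Ideal.span ((fun d => monomial d (1 : k)) '' G₁) := by
  classical
  obtain ⟨G, hG, rfl⟩ := hIsqfree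
  have hinj : ∀ D : Finset (Fin (n + 1)), 0 ∉ D ∨ 1 ∉ D → Set.InjOn g D := fun D h01 =>
    injOn_of_notMem_zero_or_notMem_one hg (by exact_mod_cast h01)
  have hJG : J = Ideal.span ((fun d => monomial d (1 : k)) '' {d | IsTransversal G d.support}) := by
    rw [hJ]
    congr 1
    ext m
    simp only [isTransversal_support_iff, Set.mem_ofPred_eq, Set.mem_image, eq_comm]
  refine ⟨(fun D => Multiset.toFinsupp D.1) ''
      (Finset.image g '' {D | IsTransversal G D ∧ (0 ∉ D ∨ 1 ∉ D)}), ?_, ?_⟩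
  · rintro _ ⟨D₁, -, rfl⟩ v
    exact Multiset.toFinsupp_val_apply_le_one D₁ v
  rw [hJG, map_rename_span_monomial_image]
  apply span_monomial_image_eq_of_exists_le
  · rintro _ ⟨_, ⟨D, ⟨hD, h01⟩, rfl⟩, rfl⟩
    refine ⟨Multiset.toFinsupp D.1, ?_, Finsupp.mapDomain_toFinsupp_val_of_injOn ?_⟩
    · rwa [Set.mem_ofPred_eq, Multiset.toFinsupp_val_support]
    · exact hinj D h01
  · rintro _ ⟨d, hd, rfl⟩
    obtain ⟨D, hDd, hD, h01⟩ := IsTransversal.exists_subset_notMem_or_notMem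
      (fun e he => hG e he 0) (fun e he => hG e he 1) hreg hd
    refine ⟨_, ⟨D.image g, ⟨D, ⟨hD, h01⟩, rfl⟩, rfl⟩, ?_⟩
    dsimp only
    rw [← Finsupp.mapDomain_toFinsupp_val_of_injOn (hinj D h01)]
    exact Finsupp.mapDomain_mono (Multiset.toFinsupp_val_le_of_subset_support hDd)

/-- If `x₁ - x₀` is a regular element on `S/I` for a squarefree monomial ideal `I`, then
the image `J₁` of the Alexander dual `J` of `I` under `x₀,x₁ ↦ x` is a squarefree
monomial ideal. -/
theorem alexander_dual_image_squarefree
    (k : Type*) [Field k] (n : ℕ) (hn : 1 ≤ n)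
    (I : Ideal (MvPolynomial (Fin (n + 1)) k))
    (hIsqfree : ∃ G : Set (Fin (n + 1) →₀ ℕ), (∀ d ∈ G, ∀ v, d v ≤ 1) ∧
      I = Ideal.span ((fun d => monomial d (1 : k)) '' G))
    (J : Ideal (MvPolynomial (Fin (n + 1)) k))
    (hJ : J = Ideal.span { m : MvPolynomial (Fin (n + 1)) k |
      ∃ d : Fin (n + 1) →₀ ℕ,
        (∀ e : Fin (n + 1) →₀ ℕ, monomial e (1 : k) ∈ I →
          ∃ v, v ∈ d.support ∧ v ∈ e.support) ∧
        m = monomial d (1 : k) })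
    (g : Fin (n + 1) → Fin n)
    (hg : ∀ i : Fin (n + 1), (g i : ℕ) = if (i : ℕ) ≤ 1 then 0 else (i : ℕ) - 1)
    (hreg : ∀ f : MvPolynomial (Fin (n + 1)) k, (X 1 - X 0) * f ∈ I → f ∈ I) :
    ∃ G₁ : Set (Fin n →₀ ℕ), (∀ d ∈ G₁, ∀ v, d v ≤ 1) ∧
      Ideal.map (rename g) J = Ideal.span ((fun d => monomial d (1 : k)) '' G₁) :=
  alexander_dual_image_squarefree_general k n I hIsqfree J hJ g hg hreg
end
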